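/- arXiv:2512.18267 — 6 statements merged into one kernel-verified Lean document; each statement's English description precedes it below -/
import Mathlib

section
/- For γ > 1 and c_v = 1/(γ−1), the pressure function p(ρ,S) = ρ^γ exp(S/(c_v ρ)) for ρ > 0, extended by p = 0 for ρ = 0, S ≤ 0 and p = +∞ otherwise, is a convex function of (ρ,S) on R². -/
open ENNReal

noncomputable def pressureFn (γ : ℝ) : ℝ × ℝ → ℝ≥0∞ :=
  fun q =>
    if 0 < q.1 then ENNReal.ofReal (q.1 ^ γ * Real.exp (q.2 / ((1 / (γ - 1)) * q.1)))
    else if q.1 = 0 ∧ q.2 ≤ 0 then 0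
    else ⊤

/-- Rewriting `ρ^γ exp(S/(c_v ρ))` as a γ-th power of the perspective of an exponential. -/
lemma fn_eq {γ : ℝ} (hγ : 1 < γ) {x : ℝ} (hx : 0 < x) (y : ℝ) :
    x ^ γ * Real.exp (y / ((1 / (γ - 1)) * x)) =
      (x * Real.exp ((γ - 1) / γ * (y / x))) ^ γ := by
  have hγ0 : (0:ℝ) < γ := by linarith
  have hc : (0:ℝ) < γ - 1 := by linarith
  rw [Real.mul_rpow hx.le (Real.exp_nonneg _), ← Real.exp_mul]
  have : (γ - 1) / γ * (y / x) * γ = y / (1 / (γ - 1) * x) := by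
    field_simp
  rw [this]

/-- Core convexity inequality in the interior region. -/
lemma coreR (γ : ℝ) (hγ : 1 < γ) {a b s u t : ℝ} (ha : 0 < a) (hb : 0 < b)
    (ht0 : 0 ≤ t) (ht1 : t ≤ 1) :
    (t*a+(1-t)*b) ^ γ * Real.exp ((t*s+(1-t)*u) / ((1/(γ-1))*(t*a+(1-t)*b)))
      ≤ t * (a ^ γ * Real.exp (s / ((1/(γ-1))*a)))
        + (1-t) * (b ^ γ * Real.exp (u / ((1/(γ-1))*b))) := by
  have hγ0 : (0:ℝ) < γ := by linarith
  have hρ : 0 < t*a+(1-t)*b := by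
    rcases ht0.lt_or_eq with h | h
    · nlinarith [mul_pos h ha, mul_nonneg (sub_nonneg.2 ht1) hb.le]
    · nlinarith
  set ρ := t*a+(1-t)*b with hρdef
  rw [fn_eq hγ hρ, fn_eq hγ ha, fn_eq hγ hb]
  set c := (γ-1)/γ with hcdef
  set ga := a * Real.exp (c * (s/a)) with hga
  set gb := b * Real.exp (c * (u/b)) with hgb
  have hga0 : 0 ≤ ga := by positivity
  have hgb0 : 0 ≤ gb := by positivity
  have step1 : ρ * Real.exp (c * ((t*s+(1-t)*u)/ρ)) ≤ t * ga + (1-t) * gb := by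
    have hw1 : 0 ≤ t*a/ρ := div_nonneg (mul_nonneg ht0 ha.le) hρ.le
    have hw2 : 0 ≤ (1-t)*b/ρ := div_nonneg (mul_nonneg (by linarith) hb.le) hρ.le
    have hsum : t*a/ρ + (1-t)*b/ρ = 1 := by
      field_simp
      exact hρdef.symm
    have h := convexOn_exp.2 (Set.mem_univ (c*(s/a))) (Set.mem_univ (c*(u/b))) hw1 hw2 hsum
    simp only [smul_eq_mul] at h
    have harg : t*a/ρ * (c*(s/a)) + (1-t)*b/ρ * (c*(u/b)) = c * ((t*s+(1-t)*u)/ρ) := by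
      field_simp
    rw [harg] at h
    calc ρ * Real.exp (c*((t*s+(1-t)*u)/ρ))
        ≤ ρ * (t*a/ρ * Real.exp (c*(s/a)) + (1-t)*b/ρ * Real.exp (c*(u/b))) :=
          mul_le_mul_of_nonneg_left h hρ.le
      _ = t * ga + (1-t) * gb := by
          rw [hga, hgb]; field_simp
  have step2 : (ρ * Real.exp (c * ((t*s+(1-t)*u)/ρ))) ^ γ ≤ (t * ga + (1-t) * gb) ^ γ :=
    Real.rpow_le_rpow (by positivity) step1 hγ0.le
  have step3 := (convexOn_rpow hγ.le).2 (Set.mem_Ici.2 hga0) (Set.mem_Ici.2 hgb0) ht0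
    (by linarith : (0:ℝ) ≤ 1 - t) (by ring)
  simp only [smul_eq_mul] at step3
  exact step2.trans step3

/-- Boundary inequality: one endpoint on the boundary part of the domain. -/
lemma bdryR (γ : ℝ) (hγ : 1 < γ) {a s t ρ σ : ℝ} (ha : 0 < a)
    (ht0 : 0 < t) (ht1 : t ≤ 1) (hρ : ρ = t*a) (hσ : σ ≤ t*s) :
    ρ ^ γ * Real.exp (σ / ((1/(γ-1))*ρ))
      ≤ t * (a ^ γ * Real.exp (s / ((1/(γ-1))*a))) := by
  subst hρ
  have hc : (0:ℝ) < γ - 1 := by linarith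
  have hta : 0 < t * a := mul_pos ht0 ha
  have hd : 0 < (1/(γ-1)) * (t*a) := by positivity
  have harg : σ / ((1/(γ-1))*(t*a)) ≤ s / ((1/(γ-1))*a) := by
    calc σ / ((1/(γ-1))*(t*a)) ≤ (t*s) / ((1/(γ-1))*(t*a)) := by gcongr
      _ = s / ((1/(γ-1))*a) := by field_simp
  have hexp : Real.exp (σ/((1/(γ-1))*(t*a))) ≤ Real.exp (s/((1/(γ-1))*a)) :=
    Real.exp_le_exp.2 harg
  have hpow : (t*a)^γ = t^γ * a^γ := Real.mul_rpow ht0.le ha.le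
  have htγ : t^γ ≤ t := by
    calc t^γ ≤ t^(1:ℝ) := Real.rpow_le_rpow_of_exponent_ge ht0 ht1 hγ.le
      _ = t := Real.rpow_one t
  calc (t*a)^γ * Real.exp (σ/((1/(γ-1))*(t*a)))
      ≤ (t*a)^γ * Real.exp (s/((1/(γ-1))*a)) :=
        mul_le_mul_of_nonneg_left hexp (by positivity)
    _ = t^γ * (a^γ * Real.exp (s/((1/(γ-1))*a))) := by rw [hpow]; ring
    _ ≤ t * (a^γ * Real.exp (s/((1/(γ-1))*a))) :=
        mul_le_mul_of_nonneg_right htγ (by positivity)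

/-- For `γ > 1`, `c_v = 1/(γ-1)`, the pressure `p(ρ,S) = ρ^γ exp(S/(c_v ρ))`
(extended by `0` for `ρ = 0, S ≤ 0` and `+∞` otherwise) is convex on `ℝ²`. -/
theorem stmt1 (γ : ℝ) (hγ : 1 < γ) :
    ∀ x y : ℝ × ℝ, ∀ t : ℝ, 0 ≤ t → t ≤ 1 →
      pressureFn γ (t • x + (1 - t) • y) ≤
        ENNReal.ofReal t * pressureFn γ x + ENNReal.ofReal (1 - t) * pressureFn γ y := by
  intro x y t ht0 ht1
  rcases ht0.lt_or_eq with h0 | h0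
  swap
  · simp [← h0]
  rcases ht1.lt_or_eq with h1 | h1
  swap
  · simp [h1]
  have h1' : 0 < 1 - t := by linarith
  obtain ⟨a, s⟩ := x
  obtain ⟨b, u⟩ := y
  have hcombo : t • ((a, s) : ℝ × ℝ) + (1 - t) • ((b, u) : ℝ × ℝ)
      = (t*a+(1-t)*b, t*s+(1-t)*u) := by
    simp [Prod.ext_iff, smul_eq_mul]
  rw [hcombo]
  simp only [pressureFn]
  by_cases hb1 : 0 < b
  · by_cases ha1 : 0 < a
    · -- both interior
      have hρ : 0 < t*a+(1-t)*b := by nlinarith [mul_pos h0 ha1, mul_pos h1' hb1]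
      rw [if_pos hρ, if_pos ha1, if_pos hb1,
        ← ENNReal.ofReal_mul h0.le, ← ENNReal.ofReal_mul h1'.le,
        ← ENNReal.ofReal_add (by positivity) (by positivity)]
      exact ENNReal.ofReal_le_ofReal (coreR γ hγ ha1 hb1 ht0 ht1)
    · by_cases ha0 : a = 0 ∧ s ≤ 0
      · -- x on boundary, y interior
        have hρ : 0 < t*a+(1-t)*b := by
          rw [ha0.1]; simpa using mul_pos h1' hb1
        rw [if_pos hρ, if_neg ha1, if_pos ha0, if_pos hb1, mul_zero, zero_add,
          ← ENNReal.ofReal_mul h1'.le]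
        refine ENNReal.ofReal_le_ofReal ?_
        refine bdryR γ hγ hb1 h1' (by linarith) ?_ ?_
        · rw [ha0.1]; ring
        · nlinarith [mul_nonpos_of_nonneg_of_nonpos h0.le ha0.2]
      · -- p x = ⊤
        rw [if_neg ha1, if_neg ha0, ENNReal.mul_top (by simp [h0] : ENNReal.ofReal t ≠ 0),
          top_add]
        exact le_top
  · by_cases hb0 : b = 0 ∧ u ≤ 0
    · by_cases ha1 : 0 < a
      · -- y on boundary, x interior
        have hρ : 0 < t*a+(1-t)*b := by
          rw [hb0.1]; simpa using mul_pos h0 ha1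
        rw [if_pos hρ, if_pos ha1, if_neg hb1, if_pos hb0, mul_zero, add_zero,
          ← ENNReal.ofReal_mul h0.le]
        refine ENNReal.ofReal_le_ofReal ?_
        refine bdryR γ hγ ha1 h0 ht1 ?_ ?_
        · rw [hb0.1]; ring
        · nlinarith [mul_nonpos_of_nonneg_of_nonpos h1'.le hb0.2]
      · by_cases ha0 : a = 0 ∧ s ≤ 0
        · -- both on boundary
          have hρ : ¬ (0 < t*a+(1-t)*b) := by rw [ha0.1, hb0.1]; simp
          have hmem : t*a+(1-t)*b = 0 ∧ t*s+(1-t)*u ≤ 0 := by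
            constructor
            · rw [ha0.1, hb0.1]; ring
            · nlinarith [mul_nonpos_of_nonneg_of_nonpos h0.le ha0.2,
                mul_nonpos_of_nonneg_of_nonpos h1'.le hb0.2]
          rw [if_neg hρ, if_pos hmem]
          exact zero_le
        · -- p x = ⊤
          rw [if_neg ha1, if_neg ha0, ENNReal.mul_top (by simp [h0] : ENNReal.ofReal t ≠ 0),
            top_add]
          exact le_top
    · -- p y = ⊤
      rw [if_neg hb1, if_neg hb0, ENNReal.mul_top (by simp [h1] : ENNReal.ofReal (1-t) ≠ 0)]
      simp
end

section
/- The total energy function E(ρ, m, S) = |m|²/(2ρ) + c_v ρ^γ exp(S/(c_v ρ)) for ρ > 0 (extended to 0 at (0,0,S) with S ≤ 0, and +∞ otherwise) is a convex lower semicontinuous function on R^{d+2}, and it is strictly convex on the interior of its effective domain {ρ > 0}. -/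
open ENNReal

section Aux

open Real Set Filter

/-- First derivative of `g t = c * (r+t*a)^γ * exp((s+t*b)/(c*(r+t*a)))`. -/
lemma g_deriv1 (γ c r s a b : ℝ) (hc : 0 < c) (t : ℝ) (ht : 0 < r + t * a) :
    HasDerivAt (fun t => c * (r + t*a) ^ γ * Real.exp ((s + t*b) / (c * (r + t*a))))
      (Real.exp ((s + t*b) / (c * (r + t*a))) * (r + t*a) ^ (γ-2) *
        (c*γ*a*(r + t*a) + b*(r + t*a) - (s + t*b)*a)) t := by
  have hR : HasDerivAt (fun t : ℝ => r + t * a) a t := by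
    simpa using ((hasDerivAt_id t).mul_const a).const_add r
  have hS : HasDerivAt (fun t : ℝ => s + t * b) b t := by
    simpa using ((hasDerivAt_id t).mul_const b).const_add s
  have hcR : HasDerivAt (fun t : ℝ => c * (r + t * a)) (c * a) t := hR.const_mul c
  have hne : c * (r + t * a) ≠ 0 := by positivity
  have hq : HasDerivAt (fun t : ℝ => (s + t*b) / (c * (r + t*a)))
      ((b * (c * (r + t*a)) - (s + t*b) * (c * a)) / (c * (r + t*a))^2) t := hS.div hcR hne
  have hφ : HasDerivAt (fun t : ℝ => Real.exp ((s + t*b) / (c * (r + t*a))))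
      (Real.exp ((s + t*b) / (c * (r + t*a))) *
        ((b * (c * (r + t*a)) - (s + t*b) * (c * a)) / (c * (r + t*a))^2)) t := hq.exp
  have hpow : HasDerivAt (fun t : ℝ => (r + t*a) ^ γ) (γ * (r + t*a) ^ (γ-1) * a) t := by
    have := (Real.hasDerivAt_rpow_const (x := r + t*a) (p := γ) (Or.inl ht.ne')).comp t hR
    simpa [mul_comm, Function.comp_def] using this
  have h := ((hpow.const_mul c).mul hφ)
  refine h.congr_deriv ?_
  have e1 : (r + t*a) ^ γ = (r + t*a) ^ (γ-2) * (r + t*a)^(2:ℕ) := by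
    rw [← Real.rpow_natCast (r + t*a) 2, ← Real.rpow_add ht]; congr 1; push_cast; ring
  have e2 : (r + t*a) ^ (γ-1) = (r + t*a) ^ (γ-2) * (r + t*a)^(1:ℕ) := by
    rw [← Real.rpow_natCast (r + t*a) 1, ← Real.rpow_add ht]; congr 1; push_cast; ring
  rw [e1, e2]
  field_simp
  ring

lemma g_deriv2 (γ c r s a b : ℝ) (hc : 0 < c) (t : ℝ) (ht : 0 < r + t * a) :
    HasDerivAt (fun t => Real.exp ((s + t*b) / (c * (r + t*a))) * (r + t*a) ^ (γ-2) *
        (c*γ*a*(r + t*a) + b*(r + t*a) - (s + t*b)*a))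
      (Real.exp ((s + t*b) / (c * (r + t*a))) * (r + t*a) ^ (γ-4) *
        (((c*γ*a*(r + t*a) + b*(r + t*a) - (s + t*b)*a) - c*a*(r + t*a))^2/c
          + c*(γ-1)*(a*(r + t*a))^2)) t := by
  have hR : HasDerivAt (fun t : ℝ => r + t * a) a t := by
    simpa using ((hasDerivAt_id t).mul_const a).const_add r
  have hS : HasDerivAt (fun t : ℝ => s + t * b) b t := by
    simpa using ((hasDerivAt_id t).mul_const b).const_add s
  have hcR : HasDerivAt (fun t : ℝ => c * (r + t * a)) (c * a) t := hR.const_mul c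
  have hne : c * (r + t * a) ≠ 0 := by positivity
  have hq : HasDerivAt (fun t : ℝ => (s + t*b) / (c * (r + t*a)))
      ((b * (c * (r + t*a)) - (s + t*b) * (c * a)) / (c * (r + t*a))^2) t := hS.div hcR hne
  have hφ : HasDerivAt (fun t : ℝ => Real.exp ((s + t*b) / (c * (r + t*a))))
      (Real.exp ((s + t*b) / (c * (r + t*a))) *
        ((b * (c * (r + t*a)) - (s + t*b) * (c * a)) / (c * (r + t*a))^2)) t := hq.exp
  have hpow : HasDerivAt (fun t : ℝ => (r + t*a) ^ (γ-2)) ((γ-2) * (r + t*a) ^ (γ-3) * a) t := by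
    have := (Real.hasDerivAt_rpow_const (x := r + t*a) (p := γ-2) (Or.inl ht.ne')).comp t hR
    have e : γ - 2 - 1 = γ - 3 := by ring
    simpa [e, mul_comm, Function.comp_def] using this
  have hA : HasDerivAt (fun t : ℝ => c*γ*a*(r + t*a) + b*(r + t*a) - (s + t*b)*a)
      (c*γ*a*a + b*a - b*a) t :=
    (((hR.const_mul (c*γ*a)).add (hR.const_mul b)).sub (hS.mul_const a))
  have h := (hφ.mul hpow).mul hA
  refine h.congr_deriv ?_
  have e1 : (r + t*a) ^ (γ-2) = (r + t*a) ^ (γ-4) * (r + t*a)^(2:ℕ) := by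
    rw [← Real.rpow_natCast (r + t*a) 2, ← Real.rpow_add ht]; congr 1; push_cast; ring
  have e2 : (r + t*a) ^ (γ-3) = (r + t*a) ^ (γ-4) * (r + t*a)^(1:ℕ) := by
    rw [← Real.rpow_natCast (r + t*a) 1, ← Real.rpow_add ht]; congr 1; push_cast; ring
  rw [Pi.mul_apply, e1, e2]
  field_simp
  ring

lemma g_strictConvex (γ c r s a b : ℝ) (hγ : 1 < γ) (hc : 0 < c) (hab : a ≠ 0 ∨ b ≠ 0) :
    StrictConvexOn ℝ {t : ℝ | 0 < r + t * a}
      (fun t => c * (r + t*a) ^ γ * Real.exp ((s + t*b) / (c * (r + t*a)))) := by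
  set D : Set ℝ := {t : ℝ | 0 < r + t * a} with hD
  have hDo : IsOpen D := isOpen_lt continuous_const (by fun_prop)
  have hDc : Convex ℝ D := by
    intro x hx y hy p q hp hq hpq
    simp only [hD, mem_setOf_eq, smul_eq_mul] at *
    have key : r + (p*x+q*y)*a = p*(r+x*a) + q*(r+y*a) := by linear_combination (-r) * hpq
    rw [key]
    rcases eq_or_lt_of_le hp with h | h
    · have hq1 : q = 1 := by linarith
      rw [← h, hq1]; simpa using hy
    · nlinarith [mul_pos h hx, mul_nonneg hq hy.le]
  apply strictConvexOn_of_deriv2_pos hDc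
  · intro t ht
    exact ((g_deriv1 γ c r s a b hc t ht).differentiableAt).continuousAt.continuousWithinAt
  · intro t ht
    rw [hDo.interior_eq] at ht
    have ht' : 0 < r + t * a := ht
    have hd2 : deriv^[2] (fun t => c * (r + t*a) ^ γ * Real.exp ((s + t*b) / (c * (r + t*a)))) t
        = (Real.exp ((s + t*b) / (c * (r + t*a))) * (r + t*a) ^ (γ-4) *
        (((c*γ*a*(r + t*a) + b*(r + t*a) - (s + t*b)*a) - c*a*(r + t*a))^2/c
          + c*(γ-1)*(a*(r + t*a))^2)) := by
      have hev : deriv (fun t => c * (r + t*a) ^ γ * Real.exp ((s + t*b) / (c * (r + t*a))))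
          =ᶠ[nhds t] (fun t => Real.exp ((s + t*b) / (c * (r + t*a))) * (r + t*a) ^ (γ-2) *
            (c*γ*a*(r + t*a) + b*(r + t*a) - (s + t*b)*a)) := by
        filter_upwards [hDo.mem_nhds ht] with u hu
        exact (g_deriv1 γ c r s a b hc u hu).deriv
      show deriv (deriv _) t = _
      rw [hev.deriv_eq]
      exact (g_deriv2 γ c r s a b hc t ht').deriv
    rw [hd2]
    have hexp : 0 < Real.exp ((s + t*b) / (c * (r + t*a))) := Real.exp_pos _
    have hpow : 0 < (r + t*a) ^ (γ-4) := Real.rpow_pos_of_pos ht' _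
    rcases hab with ha | hb
    · have h1 : 0 < c*(γ-1)*(a*(r + t*a))^2 := by
        have : a * (r + t*a) ≠ 0 := mul_ne_zero ha ht'.ne'
        have h2 : 0 < (a*(r + t*a))^2 := by positivity
        have : 0 < γ - 1 := by linarith
        positivity
      have h0 : 0 ≤ ((c*γ*a*(r + t*a) + b*(r + t*a) - (s + t*b)*a) - c*a*(r + t*a))^2/c := by
        positivity
      positivity
    · by_cases ha : a = 0
      · subst ha
        have hAe : (c*γ*0*(r + t*0) + b*(r + t*0) - (s + t*b)*0) - c*0*(r + t*0)
            = b * (r + t*0) := by ring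
        rw [hAe]
        have hb2 : 0 < (b * (r + t*0))^2 := by
          have : b * (r + t*0) ≠ 0 := mul_ne_zero hb (by simpa using ht'.ne')
          positivity
        have h1 : 0 ≤ c*(γ-1)*((0:ℝ)*(r + t*0))^2 := by nlinarith
        have : 0 < (b * (r + t*0))^2/c + c*(γ-1)*((0:ℝ)*(r + t*0))^2 := by
          have := div_pos hb2 hc
          nlinarith
        positivity
      · have h1 : 0 < c*(γ-1)*(a*(r + t*a))^2 := by
          have : a * (r + t*a) ≠ 0 := mul_ne_zero ha ht'.ne'
          have h2 : 0 < (a*(r + t*a))^2 := by positivity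
          have : 0 < γ - 1 := by linarith
          positivity
        have h0 : 0 ≤ ((c*γ*a*(r + t*a) + b*(r + t*a) - (s + t*b)*a) - c*a*(r + t*a))^2/c := by
          positivity
        positivity

lemma internal_lt (γ : ℝ) (hγ : 1 < γ) (ρ1 ρ2 S1 S2 t : ℝ) (hρ1 : 0 < ρ1) (hρ2 : 0 < ρ2)
    (hne : ρ1 ≠ ρ2 ∨ S1 ≠ S2) (ht0 : 0 < t) (ht1 : t < 1) :
    (1/(γ-1)) * (t*ρ1+(1-t)*ρ2) ^ γ *
        Real.exp ((t*S1+(1-t)*S2) / ((1/(γ-1)) * (t*ρ1+(1-t)*ρ2))) <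
      t * ((1/(γ-1)) * ρ1 ^ γ * Real.exp (S1 / ((1/(γ-1)) * ρ1))) +
      (1-t) * ((1/(γ-1)) * ρ2 ^ γ * Real.exp (S2 / ((1/(γ-1)) * ρ2))) := by
  have hc : 0 < 1/(γ-1) := by
    have : 0 < γ - 1 := by linarith
    positivity
  have hab : ρ1 - ρ2 ≠ 0 ∨ S1 - S2 ≠ 0 := by
    rcases hne with h | h
    · exact Or.inl (sub_ne_zero.mpr h)
    · exact Or.inr (sub_ne_zero.mpr h)
  have hsc := g_strictConvex γ (1/(γ-1)) ρ2 S2 (ρ1-ρ2) (S1-S2) hγ hc hab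
  have h1 : (1:ℝ) ∈ {u : ℝ | 0 < ρ2 + u * (ρ1-ρ2)} := by
    simp only [mem_setOf_eq]; linarith
  have h0 : (0:ℝ) ∈ {u : ℝ | 0 < ρ2 + u * (ρ1-ρ2)} := by
    simp only [mem_setOf_eq]; linarith
  have key := hsc.2 h1 h0 one_ne_zero ht0 (show (0:ℝ) < 1 - t by linarith) (by ring)
  simp only [smul_eq_mul, mul_one, mul_zero, add_zero] at key
  have e1 : ρ2 + 1 * (ρ1 - ρ2) = ρ1 := by ring
  have e2 : ρ2 + 0 * (ρ1 - ρ2) = ρ2 := by ring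
  have e3 : S2 + 1 * (S1 - S2) = S1 := by ring
  have e4 : S2 + 0 * (S1 - S2) = S2 := by ring
  have e5 : ρ2 + t * (ρ1 - ρ2) = t*ρ1+(1-t)*ρ2 := by ring
  have e6 : S2 + t * (S1 - S2) = t*S1+(1-t)*S2 := by ring
  rw [e1, e2, e3, e4, e5, e6] at key
  exact key

lemma kin_identity (d : ℕ) (ρ1 ρ2 t : ℝ) (m1 m2 : EuclideanSpace ℝ (Fin d))
    (hρ1 : 0 < ρ1) (hρ2 : 0 < ρ2) (ht0 : 0 < t) (ht1 : t < 1) :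
    t * (‖m1‖^2/(2*ρ1)) + (1-t) * (‖m2‖^2/(2*ρ2))
      = ‖t•m1+(1-t)•m2‖^2/(2*(t*ρ1+(1-t)*ρ2))
        + t*(1-t)*‖ρ2•m1-ρ1•m2‖^2/(2*ρ1*ρ2*(t*ρ1+(1-t)*ρ2)) := by
  have h1 : ‖t•m1+(1-t)•m2‖^2
      = t^2*‖m1‖^2 + 2*(t*(1-t))*(inner ℝ m1 m2 : ℝ) + (1-t)^2*‖m2‖^2 := by
    rw [norm_add_sq_real, real_inner_smul_left, real_inner_smul_right, norm_smul, norm_smul]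
    simp [Real.norm_eq_abs, mul_pow, sq_abs]
    ring
  have h2 : ‖ρ2•m1-ρ1•m2‖^2
      = ρ2^2*‖m1‖^2 - 2*(ρ2*ρ1)*(inner ℝ m1 m2 : ℝ) + ρ1^2*‖m2‖^2 := by
    rw [norm_sub_sq_real, real_inner_smul_left, real_inner_smul_right, norm_smul, norm_smul]
    simp [Real.norm_eq_abs, mul_pow, sq_abs]
    ring
  have hden : 0 < t*ρ1+(1-t)*ρ2 := by nlinarith
  rw [h1, h2]
  field_simp
  ring

lemma Ereal_lt (d : ℕ) (γ : ℝ) (hγ : 1 < γ) (ρ1 ρ2 S1 S2 t : ℝ)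
    (m1 m2 : EuclideanSpace ℝ (Fin d)) (hρ1 : 0 < ρ1) (hρ2 : 0 < ρ2)
    (ht0 : 0 < t) (ht1 : t < 1) (hne : ¬(ρ1 = ρ2 ∧ m1 = m2 ∧ S1 = S2)) :
    ‖t•m1+(1-t)•m2‖^2/(2*(t*ρ1+(1-t)*ρ2)) + (1/(γ-1))*(t*ρ1+(1-t)*ρ2)^γ *
        Real.exp ((t*S1+(1-t)*S2)/((1/(γ-1))*(t*ρ1+(1-t)*ρ2)))
      < t * (‖m1‖^2/(2*ρ1) + (1/(γ-1))*ρ1^γ*Real.exp (S1/((1/(γ-1))*ρ1)))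
        + (1-t) * (‖m2‖^2/(2*ρ2) + (1/(γ-1))*ρ2^γ*Real.exp (S2/((1/(γ-1))*ρ2))) := by
  have hden : 0 < t*ρ1+(1-t)*ρ2 := by nlinarith
  have hkin := kin_identity d ρ1 ρ2 t m1 m2 hρ1 hρ2 ht0 ht1
  by_cases hrs : ρ1 = ρ2 ∧ S1 = S2
  · obtain ⟨h1, h2⟩ := hrs
    have hm : m1 ≠ m2 := by
      intro h; exact hne ⟨h1, h, h2⟩
    subst h1 h2
    have hD : (0:ℝ) < ‖ρ1•m1-ρ1•m2‖^2 := by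
      have hv : ρ1•m1 - ρ1•m2 ≠ 0 := by
        rw [sub_ne_zero]
        intro h
        exact hm (smul_right_injective _ hρ1.ne' h)
      have := norm_pos_iff.mpr hv
      positivity
    have hcor : 0 < t*(1-t)*‖ρ1•m1-ρ1•m2‖^2/(2*ρ1*ρ1*(t*ρ1+(1-t)*ρ1)) := by
      have h1t : 0 < 1 - t := by linarith
      have hden' : 0 < t*ρ1+(1-t)*ρ1 := by nlinarith
      positivity
    have eρ : t*ρ1+(1-t)*ρ1 = ρ1 := by ring
    have eS : t*S1+(1-t)*S1 = S1 := by ring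
    rw [eρ] at hkin hcor
    rw [eρ, eS]
    linarith [hkin]
  · have hne' : ρ1 ≠ ρ2 ∨ S1 ≠ S2 := by tauto
    have hint := internal_lt γ hγ ρ1 ρ2 S1 S2 t hρ1 hρ2 hne' ht0 ht1
    have hcor : 0 ≤ t*(1-t)*‖ρ2•m1-ρ1•m2‖^2/(2*ρ1*ρ2*(t*ρ1+(1-t)*ρ2)) := by
      have h1t : 0 < 1 - t := by linarith
      positivity
    linarith [hkin]

lemma Ereal_le (d : ℕ) (γ : ℝ) (hγ : 1 < γ) (ρ1 ρ2 S1 S2 t : ℝ)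
    (m1 m2 : EuclideanSpace ℝ (Fin d)) (hρ1 : 0 < ρ1) (hρ2 : 0 < ρ2)
    (ht0 : 0 < t) (ht1 : t < 1) :
    ‖t•m1+(1-t)•m2‖^2/(2*(t*ρ1+(1-t)*ρ2)) + (1/(γ-1))*(t*ρ1+(1-t)*ρ2)^γ *
        Real.exp ((t*S1+(1-t)*S2)/((1/(γ-1))*(t*ρ1+(1-t)*ρ2)))
      ≤ t * (‖m1‖^2/(2*ρ1) + (1/(γ-1))*ρ1^γ*Real.exp (S1/((1/(γ-1))*ρ1)))
        + (1-t) * (‖m2‖^2/(2*ρ2) + (1/(γ-1))*ρ2^γ*Real.exp (S2/((1/(γ-1))*ρ2))) := by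
  by_cases h : ρ1 = ρ2 ∧ m1 = m2 ∧ S1 = S2
  · obtain ⟨h1, h2, h3⟩ := h
    subst h1 h2 h3
    have eρ : t*ρ1+(1-t)*ρ1 = ρ1 := by ring
    have eS : t*S1+(1-t)*S1 = S1 := by ring
    have em : t•m1+(1-t)•m1 = m1 := by rw [← add_smul]; norm_num
    rw [eρ, eS, em]
    linarith
  · exact (Ereal_lt d γ hγ ρ1 ρ2 S1 S2 t m1 m2 hρ1 hρ2 ht0 ht1 h).le

lemma blowup (γ k : ℝ) (hγ : 1 < γ) (hk : 0 < k) :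
    Filter.Tendsto (fun ρ : ℝ => (1/(γ-1))*ρ^γ*Real.exp (k/((1/(γ-1))*ρ)))
      (nhdsWithin 0 (Set.Ioi 0)) Filter.atTop := by
  have hγ1 : 0 < γ - 1 := by linarith
  have hc : 0 < 1/(γ-1) := by positivity
  have hG : Filter.Tendsto (fun y : ℝ => (1/(γ-1)) * (Real.exp ((k/(1/(γ-1)))*y) / y^γ))
      Filter.atTop Filter.atTop :=
    (tendsto_exp_mul_div_rpow_atTop γ (k/(1/(γ-1))) (by positivity)).const_mul_atTop hc
  have hInv : Filter.Tendsto (fun ρ : ℝ => ρ⁻¹) (nhdsWithin 0 (Set.Ioi 0)) Filter.atTop :=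
    tendsto_inv_nhdsGT_zero
  have hcomp := hG.comp hInv
  apply hcomp.congr'
  filter_upwards [self_mem_nhdsWithin] with ρ (hρ : 0 < ρ)
  show (1/(γ-1)) * (Real.exp ((k/(1/(γ-1)))*ρ⁻¹) / (ρ⁻¹)^γ) = _
  rw [Real.inv_rpow hρ.le]
  have e1 : (k/(1/(γ-1)))*ρ⁻¹ = k/((1/(γ-1))*ρ) := by
    field_simp
  rw [e1, div_inv_eq_mul]
  ring

lemma blowup' (γ k M : ℝ) (hγ : 1 < γ) (hk : 0 < k) :
    ∃ δ > 0, ∀ ρ : ℝ, 0 < ρ → ρ < δ →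
      M < (1/(γ-1))*ρ^γ*Real.exp (k/((1/(γ-1))*ρ)) := by
  have h := (blowup γ k hγ hk).eventually (Filter.eventually_gt_atTop M)
  rw [Filter.Eventually, mem_nhdsGT_iff_exists_Ioo_subset] at h
  obtain ⟨u, hu, hsub⟩ := h
  simp only [Set.mem_Ioi] at hu
  exact ⟨u, hu, fun ρ h1 h2 => hsub ⟨h1, h2⟩⟩

end Aux

open Classical in
noncomputable def totalE (d : ℕ) (γ : ℝ) : ℝ × EuclideanSpace ℝ (Fin d) × ℝ → ℝ≥0∞ :=
  fun p =>
    if 0 < p.1 then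
      ENNReal.ofReal (‖p.2.1‖ ^ 2 / (2 * p.1) +
        (1 / (γ - 1)) * p.1 ^ γ * Real.exp (p.2.2 / ((1 / (γ - 1)) * p.1)))
    else if p.1 = 0 ∧ p.2.1 = 0 ∧ p.2.2 ≤ 0 then 0
    else ⊤

section Aux2

open Real Set Filter

lemma Er_nonneg (γ ρ S : ℝ) {d : ℕ} (m : EuclideanSpace ℝ (Fin d)) (hγ : 1 < γ) (hρ : 0 < ρ) :
    0 ≤ ‖m‖^2/(2*ρ) + (1/(γ-1))*ρ^γ*Real.exp (S/((1/(γ-1))*ρ)) := by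
  have hc : 0 < 1/(γ-1) := by
    have : 0 < γ - 1 := by linarith
    positivity
  positivity

lemma comb_fst (d : ℕ) (x y : ℝ × EuclideanSpace ℝ (Fin d) × ℝ) (t : ℝ) :
    (t • x + (1 - t) • y).1 = t * x.1 + (1-t) * y.1 := rfl

lemma comb_m (d : ℕ) (x y : ℝ × EuclideanSpace ℝ (Fin d) × ℝ) (t : ℝ) :
    (t • x + (1 - t) • y).2.1 = t • x.2.1 + (1-t) • y.2.1 := rfl

lemma comb_S (d : ℕ) (x y : ℝ × EuclideanSpace ℝ (Fin d) × ℝ) (t : ℝ) :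
    (t • x + (1 - t) • y).2.2 = t * x.2.2 + (1-t) * y.2.2 := rfl

lemma strict_part (d : ℕ) (γ : ℝ) (hγ : 1 < γ) :
    ∀ x y : ℝ × EuclideanSpace ℝ (Fin d) × ℝ, x ≠ y → 0 < x.1 → 0 < y.1 →
      ∀ t : ℝ, 0 < t → t < 1 →
      totalE d γ (t • x + (1 - t) • y) <
        ENNReal.ofReal t * totalE d γ x + ENNReal.ofReal (1 - t) * totalE d γ y := by
  intro x y hxy hx hy t ht0 ht1
  have hden : 0 < t * x.1 + (1-t) * y.1 := by nlinarith
  have hcomb : 0 < (t • x + (1 - t) • y).1 := by rw [comb_fst]; exact hden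
  have hne : ¬(x.1 = y.1 ∧ x.2.1 = y.2.1 ∧ x.2.2 = y.2.2) := by
    intro ⟨h1, h2, h3⟩
    exact hxy (Prod.ext h1 (Prod.ext h2 h3))
  have key := Ereal_lt d γ hγ x.1 y.1 x.2.2 y.2.2 t x.2.1 y.2.1 hx hy ht0 ht1 hne
  rw [totalE, if_pos hcomb, totalE, if_pos hx, totalE, if_pos hy,
    comb_fst, comb_m, comb_S]
  rw [← ENNReal.ofReal_mul ht0.le, ← ENNReal.ofReal_mul (by linarith : (0:ℝ) ≤ 1 - t),
    ← ENNReal.ofReal_add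
      (mul_nonneg ht0.le (Er_nonneg γ x.1 x.2.2 x.2.1 hγ hx))
      (mul_nonneg (by linarith) (Er_nonneg γ y.1 y.2.2 y.2.1 hγ hy))]
  apply (ENNReal.ofReal_lt_ofReal_iff _).mpr
  · exact key
  · calc (0:ℝ) ≤ _ := Er_nonneg γ _ (t * x.2.2 + (1-t) * y.2.2) (t • x.2.1 + (1-t) • y.2.1) hγ hden
    _ < _ := key

lemma vac_le (γ : ℝ) (hγ : 1 < γ) (ρ S Sy t : ℝ) (hρ : 0 < ρ) (ht : 0 < t) (ht1 : t < 1)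
    (hSy : Sy ≤ 0) :
    (1/(γ-1))*(t*ρ)^γ*Real.exp ((t*S+(1-t)*Sy)/((1/(γ-1))*(t*ρ)))
      ≤ t*((1/(γ-1))*ρ^γ*Real.exp (S/((1/(γ-1))*ρ))) := by
  have hγ1 : 0 < γ - 1 := by linarith
  have hc : 0 < 1/(γ-1) := by positivity
  have harg : (t*S+(1-t)*Sy)/((1/(γ-1))*(t*ρ)) ≤ S/((1/(γ-1))*ρ) := by
    rw [div_le_div_iff₀ (by positivity) (by positivity)]
    have h1 : (1-t)*Sy ≤ 0 := mul_nonpos_of_nonneg_of_nonpos (by linarith) hSy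
    nlinarith [mul_nonpos_of_nonneg_of_nonpos (le_of_lt (by positivity : (0:ℝ) < 1/(γ-1)*ρ)) h1]
  have hexp := Real.exp_le_exp.mpr harg
  have htγ : t ^ γ ≤ t := by
    have := Real.rpow_le_rpow_of_exponent_ge ht (le_of_lt ht1) (le_of_lt hγ)
    rwa [Real.rpow_one] at this
  calc (1/(γ-1))*(t*ρ)^γ*Real.exp ((t*S+(1-t)*Sy)/((1/(γ-1))*(t*ρ)))
      = (1/(γ-1))*ρ^γ*(t^γ * Real.exp ((t*S+(1-t)*Sy)/((1/(γ-1))*(t*ρ)))) := by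
        rw [Real.mul_rpow ht.le hρ.le]; ring
    _ ≤ (1/(γ-1))*ρ^γ*(t * Real.exp (S/((1/(γ-1))*ρ))) := by
        apply mul_le_mul_of_nonneg_left _ (by positivity)
        exact mul_le_mul htγ hexp (Real.exp_pos _).le ht.le
    _ = t*((1/(γ-1))*ρ^γ*Real.exp (S/((1/(γ-1))*ρ))) := by ring

lemma mixed_le (d : ℕ) (γ : ℝ) (hγ : 1 < γ) (x y : ℝ × EuclideanSpace ℝ (Fin d) × ℝ)
    (t : ℝ) (hx1 : 0 < x.1) (hy0 : y.1 = 0 ∧ y.2.1 = 0 ∧ y.2.2 ≤ 0)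
    (ht0 : 0 < t) (ht1 : t < 1) :
    totalE d γ (t • x + (1 - t) • y) ≤
      ENNReal.ofReal t * totalE d γ x + ENNReal.ofReal (1 - t) * totalE d γ y := by
  obtain ⟨hy1, hym, hyS⟩ := hy0
  have hcomb : 0 < (t • x + (1 - t) • y).1 := by
    rw [comb_fst, hy1]; nlinarith
  have hEy : totalE d γ y = 0 := by
    rw [totalE, if_neg (by rw [hy1]; exact lt_irrefl 0), if_pos ⟨hy1, hym, hyS⟩]
  rw [totalE, if_pos hcomb, hEy, mul_zero, add_zero, totalE, if_pos hx1,
    comb_fst, comb_m, comb_S, hy1, hym, smul_zero, add_zero, mul_zero, add_zero,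
    ← ENNReal.ofReal_mul ht0.le]
  apply ENNReal.ofReal_le_ofReal
  have hkin : ‖t • x.2.1‖^2/(2*(t*x.1)) = t*(‖x.2.1‖^2/(2*x.1)) := by
    rw [norm_smul]
    simp only [Real.norm_eq_abs, mul_pow, sq_abs, abs_of_pos ht0]
    field_simp
  have hint := vac_le γ hγ x.1 x.2.2 y.2.2 t hx1 ht0 ht1 hyS
  calc ‖t • x.2.1‖ ^ 2 / (2 * (t * x.1)) +
        1 / (γ - 1) * (t * x.1) ^ γ * Real.exp ((t * x.2.2 + (1-t) * y.2.2) / (1 / (γ - 1) * (t * x.1)))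
      ≤ t*(‖x.2.1‖^2/(2*x.1)) + t*((1/(γ-1))*x.1^γ*Real.exp (x.2.2/((1/(γ-1))*x.1))) := by
        rw [hkin]; exact add_le_add le_rfl hint
    _ = t * (‖x.2.1‖ ^ 2 / (2 * x.1) + 1 / (γ - 1) * x.1 ^ γ * Real.exp (x.2.2 / (1 / (γ - 1) * x.1))) := by
        ring

lemma convex_part (d : ℕ) (γ : ℝ) (hγ : 1 < γ) :
    ∀ x y : ℝ × EuclideanSpace ℝ (Fin d) × ℝ, ∀ t : ℝ, 0 ≤ t → t ≤ 1 →
      totalE d γ (t • x + (1 - t) • y) ≤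
        ENNReal.ofReal t * totalE d γ x + ENNReal.ofReal (1 - t) * totalE d γ y := by
  intro x y t ht0 ht1
  rcases eq_or_lt_of_le ht0 with h0 | h0
  · rw [← h0]; simp
  rcases eq_or_lt_of_le ht1 with h1 | h1
  · rw [h1]; simp
  by_cases hxT : totalE d γ x = ⊤
  · rw [hxT, ENNReal.mul_top (ENNReal.ofReal_pos.mpr h0).ne', top_add]; exact le_top
  by_cases hyT : totalE d γ y = ⊤
  · rw [hyT, ENNReal.mul_top (ENNReal.ofReal_pos.mpr (by linarith : (0:ℝ) < 1 - t)).ne',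
      add_top]
    exact le_top
  have hx' : 0 < x.1 ∨ (x.1 = 0 ∧ x.2.1 = 0 ∧ x.2.2 ≤ 0) := by
    by_cases h : 0 < x.1
    · exact Or.inl h
    · right; by_contra hcon; exact hxT (by rw [totalE, if_neg h, if_neg hcon])
  have hy' : 0 < y.1 ∨ (y.1 = 0 ∧ y.2.1 = 0 ∧ y.2.2 ≤ 0) := by
    by_cases h : 0 < y.1
    · exact Or.inl h
    · right; by_contra hcon; exact hyT (by rw [totalE, if_neg h, if_neg hcon])
  rcases hx' with hx1 | hxv <;> rcases hy' with hy1 | hyv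
  · -- both positive
    have hden : 0 < t * x.1 + (1-t) * y.1 := by nlinarith
    have hcomb : 0 < (t • x + (1 - t) • y).1 := by rw [comb_fst]; exact hden
    have key := Ereal_le d γ hγ x.1 y.1 x.2.2 y.2.2 t x.2.1 y.2.1 hx1 hy1 h0 h1
    rw [totalE, if_pos hcomb, totalE, if_pos hx1, totalE, if_pos hy1,
      comb_fst, comb_m, comb_S]
    rw [← ENNReal.ofReal_mul h0.le, ← ENNReal.ofReal_mul (by linarith : (0:ℝ) ≤ 1 - t),
      ← ENNReal.ofReal_add
        (mul_nonneg h0.le (Er_nonneg γ x.1 x.2.2 x.2.1 hγ hx1))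
        (mul_nonneg (by linarith) (Er_nonneg γ y.1 y.2.2 y.2.1 hγ hy1))]
    exact ENNReal.ofReal_le_ofReal key
  · exact mixed_le d γ hγ x y t hx1 hyv h0 h1
  · have := mixed_le d γ hγ y x (1-t) hy1 hxv (by linarith) (by linarith)
    have harg : (1-t) • y + (1-(1-t)) • x = t • x + (1-t) • y := by
      rw [_root_.sub_sub_cancel, add_comm]
    rw [harg, show (1:ℝ)-(1-t) = t from _root_.sub_sub_cancel 1 t] at this
    exact le_trans this (le_of_eq (add_comm _ _))
  · -- both vacuum
    have h1' : (t • x + (1 - t) • y).1 = 0 := by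
      rw [comb_fst, hxv.1, hyv.1]; ring
    have hm : (t • x + (1 - t) • y).2.1 = 0 := by
      rw [comb_m, hxv.2.1, hyv.2.1, smul_zero, smul_zero, add_zero]
    have hS : (t • x + (1 - t) • y).2.2 ≤ 0 := by
      rw [comb_S]
      have := mul_nonpos_of_nonneg_of_nonpos ht0 hxv.2.2
      have := mul_nonpos_of_nonneg_of_nonpos (by linarith : (0:ℝ) ≤ 1-t) hyv.2.2
      linarith
    rw [totalE, if_neg (by rw [h1']; exact lt_irrefl 0), if_pos ⟨h1', hm, hS⟩]
    exact zero_le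

lemma lsc_part (d : ℕ) (γ : ℝ) (hγ : 1 < γ) : LowerSemicontinuous (totalE d γ) := by
  have hγ1 : 0 < γ - 1 := by linarith
  have hc : 0 < 1/(γ-1) := by positivity
  have hfst : Continuous fun q : ℝ × EuclideanSpace ℝ (Fin d) × ℝ => q.1 := continuous_fst
  have hmc : Continuous fun q : ℝ × EuclideanSpace ℝ (Fin d) × ℝ => q.2.1 :=
    continuous_fst.comp continuous_snd
  have hSc : Continuous fun q : ℝ × EuclideanSpace ℝ (Fin d) × ℝ => q.2.2 :=
    continuous_snd.comp continuous_snd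
  intro p y hy
  rcases lt_trichotomy p.1 0 with h | h | h
  · -- negative density : locally ⊤
    have hptop : totalE d γ p = ⊤ := by
      rw [totalE, if_neg (by linarith), if_neg (fun hcon => absurd hcon.1 h.ne)]
    rw [hptop] at hy
    have hev : ∀ᶠ q in nhds p, q.1 < 0 :=
      (isOpen_lt hfst continuous_const).eventually_mem h
    filter_upwards [hev] with q hq
    rw [totalE, if_neg (by linarith), if_neg (fun hcon => absurd hcon.1 hq.ne)]
    exact hy
  · -- boundary
    by_cases hvac : p.2.1 = 0 ∧ p.2.2 ≤ 0
    · rw [totalE, if_neg (by rw [h]; exact lt_irrefl 0), if_pos ⟨h, hvac.1, hvac.2⟩] at hy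
      exact absurd hy (by simp)
    · have hptop : totalE d γ p = ⊤ := by
        rw [totalE, if_neg (by rw [h]; exact lt_irrefl 0),
          if_neg (fun hcon => hvac ⟨hcon.2.1, hcon.2.2⟩)]
      rw [hptop] at hy
      have hyT : y ≠ ⊤ := hy.ne
      by_cases hm : p.2.1 = 0
      · -- m = 0, S > 0
        have hS : 0 < p.2.2 := by
          by_contra hcon
          exact hvac ⟨hm, by linarith⟩
        obtain ⟨δ, hδ, hδp⟩ := blowup' γ (p.2.2/2) y.toReal hγ (by linarith)
        have hev1 : ∀ᶠ q in nhds p, p.2.2/2 < q.2.2 :=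
          (isOpen_lt continuous_const hSc).eventually_mem (by simp; linarith)
        have hev2 : ∀ᶠ q in nhds p, q.1 < δ :=
          (isOpen_lt hfst continuous_const).eventually_mem
            (by simp only [Set.mem_setOf_eq, h]; exact hδ)
        filter_upwards [hev1, hev2] with q h1 h2
        by_cases hq : 0 < q.1
        · rw [totalE, if_pos hq, gt_iff_lt, ENNReal.lt_ofReal_iff_toReal_lt hyT]
          have hbd := hδp q.1 hq h2
          have hexp : Real.exp ((p.2.2/2)/((1/(γ-1))*q.1)) ≤ Real.exp (q.2.2/((1/(γ-1))*q.1)) := by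
            apply Real.exp_le_exp.mpr
            apply div_le_div_of_nonneg_right ?_ ?_ |>.trans le_rfl
            · linarith
            · positivity
          have hint : (1/(γ-1))*q.1^γ*Real.exp ((p.2.2/2)/((1/(γ-1))*q.1))
              ≤ (1/(γ-1))*q.1^γ*Real.exp (q.2.2/((1/(γ-1))*q.1)) := by
            apply mul_le_mul_of_nonneg_left hexp
            positivity
          have hkin : 0 ≤ ‖q.2.1‖^2/(2*q.1) := by positivity
          linarith
        · rw [totalE, if_neg hq, if_neg (fun hcon => by linarith [hcon.2.2])]
          exact hy
      · -- m ≠ 0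
        have hε : 0 < ‖p.2.1‖ := norm_pos_iff.mpr hm
        set ε := ‖p.2.1‖ with hεdef
        set δ := (ε/2)^2/(2*(y.toReal+1)) with hδdef
        have hytr : 0 ≤ y.toReal := ENNReal.toReal_nonneg
        have hδ : 0 < δ := by positivity
        have hev1 : ∀ᶠ q in nhds p, ε/2 < ‖q.2.1‖ :=
          (isOpen_lt continuous_const hmc.norm).eventually_mem (by simp only [mem_setOf_eq]; linarith)
        have hev2 : ∀ᶠ q in nhds p, q.1 < δ :=
          (isOpen_lt hfst continuous_const).eventually_mem
            (by simp only [Set.mem_setOf_eq, h]; exact hδ)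
        filter_upwards [hev1, hev2] with q h1 h2
        by_cases hq : 0 < q.1
        · rw [totalE, if_pos hq, gt_iff_lt, ENNReal.lt_ofReal_iff_toReal_lt hyT]
          have hkb : (ε/2)^2/(2*δ) ≤ ‖q.2.1‖^2/(2*q.1) := by
            apply div_le_div₀ (by positivity) (by nlinarith) (by linarith) (by linarith)
          have hval : (ε/2)^2/(2*δ) = y.toReal + 1 := by
            rw [hδdef]
            have : (ε/2)^2 ≠ 0 := by positivity
            field_simp
          have hint : 0 ≤ (1/(γ-1))*q.1^γ*Real.exp (q.2.2/((1/(γ-1))*q.1)) := by positivity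
          linarith
        · rw [totalE, if_neg hq, if_neg]
          · exact hy
          · intro hcon
            rw [hcon.2.1] at h1
            simp at h1
            linarith
  · -- positive density: continuity
    have hne2 : (2:ℝ) * p.1 ≠ 0 := by positivity
    have hnec : (1/(γ-1)) * p.1 ≠ 0 := by positivity
    have h1 : ContinuousAt (fun q : ℝ × EuclideanSpace ℝ (Fin d) × ℝ =>
        ‖q.2.1‖^2/(2*q.1)) p :=
      ((hmc.norm.pow 2).continuousAt).div ((continuous_const.mul hfst).continuousAt) hne2
    have h2 : ContinuousAt (fun q : ℝ × EuclideanSpace ℝ (Fin d) × ℝ => q.1^γ) p :=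
      (Real.continuousAt_rpow_const p.1 γ (Or.inl h.ne')).comp hfst.continuousAt
    have h3 : ContinuousAt (fun q : ℝ × EuclideanSpace ℝ (Fin d) × ℝ =>
        Real.exp (q.2.2/((1/(γ-1))*q.1))) p :=
      Real.continuous_exp.continuousAt.comp
        (hSc.continuousAt.div ((continuous_const.mul hfst).continuousAt) hnec)
    have hexpr : ContinuousAt (fun q : ℝ × EuclideanSpace ℝ (Fin d) × ℝ =>
        ‖q.2.1‖^2/(2*q.1) + (1/(γ-1))*q.1^γ*Real.exp (q.2.2/((1/(γ-1))*q.1))) p :=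
      h1.add ((continuousAt_const.mul h2).mul h3)
    have hca : ContinuousAt (fun q : ℝ × EuclideanSpace ℝ (Fin d) × ℝ =>
        ENNReal.ofReal (‖q.2.1‖^2/(2*q.1) +
          (1/(γ-1))*q.1^γ*Real.exp (q.2.2/((1/(γ-1))*q.1)))) p :=
      ENNReal.continuous_ofReal.continuousAt.comp hexpr
    have hfp : totalE d γ p = ENNReal.ofReal (‖p.2.1‖^2/(2*p.1) +
        (1/(γ-1))*p.1^γ*Real.exp (p.2.2/((1/(γ-1))*p.1))) := by
      rw [totalE, if_pos h]
    rw [hfp] at hy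
    have hev1 := Filter.Tendsto.eventually_const_lt hy hca
    have hev2 : ∀ᶠ q in nhds p, 0 < q.1 :=
      (isOpen_lt continuous_const hfst).eventually_mem h
    filter_upwards [hev1, hev2] with q hq1 hq2
    rw [totalE, if_pos hq2]
    exact hq1

end Aux2

/-- The total energy `E(ρ,m,S) = |m|²/(2ρ) + c_v ρ^γ exp(S/(c_v ρ))` is convex and
lower semicontinuous on `ℝ^{d+2}`, and strictly convex on the set `{ρ > 0}`. -/
theorem stmt3 (d : ℕ) (γ : ℝ) (hγ : 1 < γ) :
    LowerSemicontinuous (totalE d γ) ∧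
    (∀ x y : ℝ × EuclideanSpace ℝ (Fin d) × ℝ, ∀ t : ℝ, 0 ≤ t → t ≤ 1 →
      totalE d γ (t • x + (1 - t) • y) ≤
        ENNReal.ofReal t * totalE d γ x + ENNReal.ofReal (1 - t) * totalE d γ y) ∧
    (∀ x y : ℝ × EuclideanSpace ℝ (Fin d) × ℝ, x ≠ y → 0 < x.1 → 0 < y.1 →
      ∀ t : ℝ, 0 < t → t < 1 →
      totalE d γ (t • x + (1 - t) • y) <
        ENNReal.ofReal t * totalE d γ x + ENNReal.ofReal (1 - t) * totalE d γ y) := by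
  exact ⟨lsc_part d γ hγ, convex_part d γ hγ, strict_part d γ hγ⟩
end

section
/- Let s : (0,∞) × (0,∞) → ℝ be the entropy density S(ρ, E_i) of a polytropic gas: S(ρ, E_i) = ρ(c_v log(E_i/(c_v ρ)) − log ρ), c_v > 0. Then S is a concave function of (ρ, E_i) on (0,∞)². -/
open Real Set

/-- The perspective of `log`: `(x, y) ↦ x * log (y / x)` is concave on `(0,∞)²`. -/
lemma key_perspective_log : ConcaveOn ℝ (Set.Ioi (0:ℝ) ×ˢ Set.Ioi (0:ℝ))
    (fun p : ℝ × ℝ => p.1 * Real.log (p.2 / p.1)) := by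
  refine ⟨(convex_Ioi 0).prod (convex_Ioi 0), ?_⟩
  rintro ⟨x1, y1⟩ ⟨hx1, hy1⟩ ⟨x2, y2⟩ ⟨hx2, hy2⟩ a b ha hb hab
  simp only [Set.mem_Ioi] at hx1 hy1 hx2 hy2
  have hρ : 0 < a * x1 + b * x2 := by
    rcases eq_or_lt_of_le ha with h | h
    · have hb1 : b = 1 := by linarith
      simp [← h, hb1]; exact hx2
    · nlinarith [mul_nonneg hb hx2.le]
  have hsum : a * x1 / (a * x1 + b * x2) + b * x2 / (a * x1 + b * x2) = 1 := by
    field_simp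
  have hlog := (strictConcaveOn_log_Ioi.concaveOn).2
    (Set.mem_Ioi.2 (div_pos hy1 hx1)) (Set.mem_Ioi.2 (div_pos hy2 hx2))
    (div_nonneg (mul_nonneg ha hx1.le) hρ.le)
    (div_nonneg (mul_nonneg hb hx2.le) hρ.le) hsum
  simp only [smul_eq_mul] at hlog ⊢
  have harg : a * x1 / (a * x1 + b * x2) * (y1 / x1) + b * x2 / (a * x1 + b * x2) * (y2 / x2)
      = (a * y1 + b * y2) / (a * x1 + b * x2) := by
    field_simp
  rw [harg] at hlog
  calc a * (x1 * Real.log (y1 / x1)) + b * (x2 * Real.log (y2 / x2))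
      = (a * x1 + b * x2) * (a * x1 / (a * x1 + b * x2) * Real.log (y1 / x1)
        + b * x2 / (a * x1 + b * x2) * Real.log (y2 / x2)) := by field_simp
    _ ≤ (a * x1 + b * x2) * Real.log ((a * y1 + b * y2) / (a * x1 + b * x2)) :=
        mul_le_mul_of_nonneg_left hlog hρ.le

/-- The entropy `S(ρ,E_i) = ρ (c_v log(E_i/(c_v ρ)) − log ρ)` of a polytropic gas
is concave on `(0,∞)²`. -/
theorem stmt10 (c_v : ℝ) (hc : 0 < c_v) :
    ConcaveOn ℝ (Set.Ioi (0 : ℝ) ×ˢ Set.Ioi (0 : ℝ))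
      (fun p : ℝ × ℝ => p.1 * (c_v * Real.log (p.2 / (c_v * p.1)) - Real.log p.1)) := by
  have K := key_perspective_log
  refine ⟨(convex_Ioi 0).prod (convex_Ioi 0), ?_⟩
  rintro ⟨x1, y1⟩ ⟨hx1, hy1⟩ ⟨x2, y2⟩ ⟨hx2, hy2⟩ a b ha hb hab
  simp only [Set.mem_Ioi] at hx1 hy1 hx2 hy2
  have h1 := K.2 (show ((x1, y1 / c_v) : ℝ × ℝ) ∈ _ from ⟨hx1, Set.mem_Ioi.2 (div_pos hy1 hc)⟩)
    (show ((x2, y2 / c_v) : ℝ × ℝ) ∈ _ from ⟨hx2, Set.mem_Ioi.2 (div_pos hy2 hc)⟩) ha hb hab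
  have h2 := K.2 (show ((x1, (1:ℝ)) : ℝ × ℝ) ∈ _ from ⟨hx1, Set.mem_Ioi.2 one_pos⟩)
    (show ((x2, (1:ℝ)) : ℝ × ℝ) ∈ _ from ⟨hx2, Set.mem_Ioi.2 one_pos⟩) ha hb hab
  simp only [Prod.smul_mk, Prod.mk_add_mk, smul_eq_mul, mul_one] at h1 h2 ⊢
  rw [hab] at h2
  have hcne : c_v ≠ 0 := hc.ne'
  have e1 : y1 / c_v / x1 = y1 / (c_v * x1) := div_div _ _ _
  have e2 : y2 / c_v / x2 = y2 / (c_v * x2) := div_div _ _ _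
  have e3 : (a * (y1 / c_v) + b * (y2 / c_v)) / (a * x1 + b * x2)
      = (a * y1 + b * y2) / (c_v * (a * x1 + b * x2)) := by
    have : a * (y1 / c_v) + b * (y2 / c_v) = (a * y1 + b * y2) / c_v := by ring
    rw [this, div_div]
  rw [e1, e2, e3] at h1
  simp only [one_div, Real.log_inv] at h2
  have h1' := mul_le_mul_of_nonneg_left h1 hc.le
  nlinarith [h1', h2]
end

section
/- Let μ be a finite measure on a measurable space Ω and let S(ρ, E_i) = ρ(c_v log(E_i/(c_v ρ)) − log ρ) be the concave entropy of a polytropic gas. Suppose ρ, ϑ : Ω → (0,∞) are measurable with ∫ ρ dμ = ρ̄ μ(Ω) and ∫ c_v ρ ϑ dμ ≤ c_v ρ̄ ϑ̄ μ(Ω), where ρ̄, ϑ̄ > 0. Then ∫ S(ρ, c_v ρ ϑ) dμ ≤ S(ρ̄, c_v ρ̄ ϑ̄) μ(Ω). -/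
open MeasureTheory

/-- Pointwise concavity bound. -/
lemma ptwise (c_v ρ₀ ϑ₀ r t : ℝ) (hc : 0 < c_v) (hρ₀ : 0 < ρ₀) (hϑ₀ : 0 < ϑ₀)
    (hr : 0 < r) (ht : 0 < t) :
    r * (c_v * Real.log t - Real.log r) ≤
      (c_v * Real.log ϑ₀ - Real.log ρ₀ - c_v - 1) * r + (c_v / ϑ₀) * (r * t) + ρ₀ := by
  have h1 : Real.log (t / ϑ₀) ≤ t / ϑ₀ - 1 :=
    Real.log_le_sub_one_of_pos (by positivity)
  have h2 : Real.log (ρ₀ / r) ≤ ρ₀ / r - 1 :=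
    Real.log_le_sub_one_of_pos (by positivity)
  rw [Real.log_div ht.ne' hϑ₀.ne'] at h1
  rw [Real.log_div hρ₀.ne' hr.ne'] at h2
  have h1' : c_v * r * (Real.log t - Real.log ϑ₀) ≤ c_v * r * (t / ϑ₀ - 1) := by
    apply mul_le_mul_of_nonneg_left h1 (by positivity)
  have h2' : r * (Real.log ρ₀ - Real.log r) ≤ r * (ρ₀ / r - 1) := by
    apply mul_le_mul_of_nonneg_left h2 hr.le
  have e1 : r * (ρ₀ / r - 1) = ρ₀ - r := by field_simp
  have e2 : c_v * r * (t / ϑ₀ - 1) = (c_v / ϑ₀) * (r * t) - c_v * r := by field_simp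
  rw [e1] at h2'
  rw [e2] at h1'
  nlinarith [h1', h2']

/-- The total entropy of a polytropic gas is maximised at the constant equilibrium
state, under the constraints of prescribed total mass and bounded total internal
energy. -/
theorem stmt12 {Ω : Type*} [MeasurableSpace Ω] (μ : Measure Ω) [IsFiniteMeasure μ]
    (c_v ρ₀ ϑ₀ : ℝ) (hc : 0 < c_v) (hρ₀ : 0 < ρ₀) (hϑ₀ : 0 < ϑ₀)
    (ρ ϑ : Ω → ℝ) (hρpos : ∀ ω, 0 < ρ ω) (hϑpos : ∀ ω, 0 < ϑ ω)
    (hρint : Integrable ρ μ)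
    (hEint : Integrable (fun ω => c_v * ρ ω * ϑ ω) μ)
    (hSint : Integrable
      (fun ω => ρ ω * (c_v * Real.log ((c_v * ρ ω * ϑ ω) / (c_v * ρ ω)) - Real.log (ρ ω))) μ)
    (hmass : ∫ ω, ρ ω ∂μ = ρ₀ * (μ Set.univ).toReal)
    (henergy : ∫ ω, c_v * ρ ω * ϑ ω ∂μ ≤ c_v * ρ₀ * ϑ₀ * (μ Set.univ).toReal) :
    ∫ ω, ρ ω * (c_v * Real.log ((c_v * ρ ω * ϑ ω) / (c_v * ρ ω)) - Real.log (ρ ω)) ∂μ ≤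
      ρ₀ * (c_v * Real.log ((c_v * ρ₀ * ϑ₀) / (c_v * ρ₀)) - Real.log ρ₀) *
        (μ Set.univ).toReal := by
  set M : ℝ := (μ Set.univ).toReal with hM
  set A : ℝ := c_v * Real.log ϑ₀ - Real.log ρ₀ - c_v - 1 with hA
  -- simplify the logs
  have hsimp : ∀ (r t : ℝ), 0 < r → 0 < t →
      (c_v * r * t) / (c_v * r) = t := by
    intro r t hr ht
    field_simp
  -- majorant
  have hg : Integrable (fun ω => A * ρ ω + (1 / ϑ₀) * (c_v * ρ ω * ϑ ω) + ρ₀) μ :=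
    ((hρint.const_mul A).add (hEint.const_mul (1 / ϑ₀))).add (integrable_const ρ₀)
  have hle : ∫ ω, ρ ω * (c_v * Real.log ((c_v * ρ ω * ϑ ω) / (c_v * ρ ω)) - Real.log (ρ ω)) ∂μ ≤
      ∫ ω, (A * ρ ω + (1 / ϑ₀) * (c_v * ρ ω * ϑ ω) + ρ₀) ∂μ := by
    apply integral_mono hSint hg
    intro ω
    dsimp only
    rw [hsimp _ _ (hρpos ω) (hϑpos ω)]
    have := ptwise c_v ρ₀ ϑ₀ (ρ ω) (ϑ ω) hc hρ₀ hϑ₀ (hρpos ω) (hϑpos ω)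
    simp only [hA]
    linarith [this, show c_v / ϑ₀ * (ρ ω * ϑ ω) = 1 / ϑ₀ * (c_v * ρ ω * ϑ ω) from by ring]
  have hgval : ∫ ω, (A * ρ ω + (1 / ϑ₀) * (c_v * ρ ω * ϑ ω) + ρ₀) ∂μ =
      A * (ρ₀ * M) + (1 / ϑ₀) * ∫ ω, c_v * ρ ω * ϑ ω ∂μ + ρ₀ * M := by
    have h1 : Integrable (fun ω => A * ρ ω) μ := hρint.const_mul A
    have h2 : Integrable (fun ω => 1 / ϑ₀ * (c_v * ρ ω * ϑ ω)) μ := hEint.const_mul (1 / ϑ₀)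
    have h12 : Integrable (fun ω => A * ρ ω + 1 / ϑ₀ * (c_v * ρ ω * ϑ ω)) μ := h1.add h2
    rw [integral_add h12 (integrable_const ρ₀), integral_add h1 h2,
      integral_const_mul, integral_const_mul, hmass, integral_const]
    simp [hM, smul_eq_mul, mul_comm, Measure.real]
  have hEbound : (1 / ϑ₀) * ∫ ω, c_v * ρ ω * ϑ ω ∂μ ≤ c_v * ρ₀ * M := by
    have := mul_le_mul_of_nonneg_left henergy (le_of_lt (one_div_pos.mpr hϑ₀))
    calc (1 / ϑ₀) * ∫ ω, c_v * ρ ω * ϑ ω ∂μ ≤ (1 / ϑ₀) * (c_v * ρ₀ * ϑ₀ * M) := this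
      _ = c_v * ρ₀ * M := by field_simp
  have hfinal : A * (ρ₀ * M) + c_v * ρ₀ * M + ρ₀ * M =
      ρ₀ * (c_v * Real.log ((c_v * ρ₀ * ϑ₀) / (c_v * ρ₀)) - Real.log ρ₀) * M := by
    rw [hsimp _ _ hρ₀ hϑ₀, hA]
    ring
  linarith [hle, hgval ▸ hle, hEbound]
end

section
/- Let H be a Hilbert space, (A_n) a sequence of nonempty bounded closed convex subsets of H and A a nonempty bounded closed convex subset, converging in the Mosco sense. Let x_n be the unique minimiser of the squared-norm functional over A_n and x the unique minimiser over A. Then x_n → x strongly in H. -/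
open Filter Topology

lemma weak_seq_cpt {H : Type*} [NormedAddCommGroup H] [InnerProductSpace ℝ H] [CompleteSpace H]
    (b : ℕ → H) (R : ℝ) (hb : ∀ n, ‖b n‖ ≤ R) :
    ∃ (ψ : ℕ → ℕ) (a : H), StrictMono ψ ∧
      ∀ y : H, Tendsto (fun k => (inner ℝ (b (ψ k)) y : ℝ)) atTop (nhds (inner ℝ a y)) := by
  have hR : 0 ≤ R := le_trans (norm_nonneg (b 0)) (hb 0)
  have hbnd : ∀ k (y : H), |(inner ℝ (b k) y : ℝ)| ≤ R * ‖y‖ := fun k y =>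
    (abs_real_inner_le_norm (b k) y).trans
      (mul_le_mul_of_nonneg_right (hb k) (norm_nonneg y))
  -- Bolzano-Weierstrass in ℕ → ℝ
  set F : ℕ → (ℕ → ℝ) := fun k j => (inner ℝ (b k) (b j) : ℝ) with hF
  have hmem : ∀ k, F k ∈ Set.pi Set.univ (fun _ : ℕ => Set.Icc (-(R*R)) (R*R)) := by
    intro k j _
    have h1 := abs_real_inner_le_norm (b k) (b j)
    have h2 : ‖b k‖ * ‖b j‖ ≤ R * R :=
      mul_le_mul (hb k) (hb j) (norm_nonneg _) hR
    exact abs_le.mp (h1.trans h2)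
  have hcpt : IsCompact (Set.pi Set.univ (fun _ : ℕ => Set.Icc (-(R*R)) (R*R))) :=
    isCompact_univ_pi (fun _ => isCompact_Icc)
  obtain ⟨f, -, ψ, hψ, htend⟩ := hcpt.tendsto_subseq hmem
  have hptwise : ∀ j, Tendsto (fun k => (inner ℝ (b (ψ k)) (b j) : ℝ)) atTop (nhds (f j)) := by
    rw [tendsto_pi_nhds] at htend
    exact fun j => htend j
  -- the set of y for which the inner products converge
  set C : Set H := {y | ∃ L : ℝ, Tendsto (fun k => (inner ℝ (b (ψ k)) y : ℝ)) atTop (nhds L)}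
    with hC
  have hCclosed : closure C ⊆ C := by
    intro y hy
    have hcauchy : CauchySeq (fun k => (inner ℝ (b (ψ k)) y : ℝ)) := by
      rw [Metric.cauchySeq_iff]
      intro ε hε
      obtain ⟨z, hzC, hz⟩ := Metric.mem_closure_iff.mp hy (ε / (4 * (R + 1)))
        (by positivity)
      obtain ⟨L, hL⟩ := hzC
      have hLc : CauchySeq (fun k => (inner ℝ (b (ψ k)) z : ℝ)) := hL.cauchySeq
      rw [Metric.cauchySeq_iff] at hLc
      obtain ⟨N, hN⟩ := hLc (ε / 2) (by positivity)
      refine ⟨N, fun m hm n hn => ?_⟩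
      have key : ∀ k, (inner ℝ (b (ψ k)) y : ℝ) =
          inner ℝ (b (ψ k)) z + inner ℝ (b (ψ k)) (y - z) := by
        intro k; rw [← inner_add_right, add_sub_cancel]
      have hyz : ∀ k, |(inner ℝ (b (ψ k)) (y - z) : ℝ)| ≤ R * ‖y - z‖ := fun k => hbnd _ _
      have hd : ‖y - z‖ < ε / (4 * (R + 1)) := by
        rw [← dist_eq_norm]; exact hz
      have hsmall : R * ‖y - z‖ ≤ ε / 4 := by
        have h1 : R * ‖y - z‖ ≤ R * (ε / (4 * (R + 1))) :=
          mul_le_mul_of_nonneg_left hd.le hR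
        have h2 : R * (ε / (4 * (R + 1))) ≤ ε / 4 := by
          rw [mul_div_assoc', div_le_div_iff₀ (by positivity) (by norm_num : (0:ℝ) < 4)]
          nlinarith
        linarith
      have hNmn := hN m hm n hn
      rw [Real.dist_eq] at hNmn ⊢
      have e1 := abs_le.mp ((hyz m).trans hsmall)
      have e2 := abs_le.mp ((hyz n).trans hsmall)
      have e3 := abs_lt.mp hNmn
      rw [key m, key n, abs_lt]
      constructor <;> [nlinarith [e1.1, e1.2, e2.1, e2.2, e3.1, e3.2];
        nlinarith [e1.1, e1.2, e2.1, e2.2, e3.1, e3.2]]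
    obtain ⟨L, hL⟩ := cauchySeq_tendsto_of_complete hcauchy
    exact ⟨L, hL⟩
  -- C is all of H
  set W : Submodule ℝ H := Submodule.span ℝ (Set.range b) with hW
  have hWC : (W : Set H) ⊆ C := by
    intro y hy
    refine Submodule.span_induction ?_ ?_ ?_ ?_ hy
    · rintro _ ⟨j, rfl⟩
      exact ⟨f j, hptwise j⟩
    · exact ⟨0, by simpa using tendsto_const_nhds⟩
    · rintro u v - - ⟨Lu, hLu⟩ ⟨Lv, hLv⟩
      exact ⟨Lu + Lv, by simpa [inner_add_right] using hLu.add hLv⟩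
    · rintro c u - ⟨Lu, hLu⟩
      exact ⟨c * Lu, by simpa [real_inner_smul_right] using hLu.const_mul c⟩
  have hWperpC : (Wᗮ : Set H) ⊆ C := by
    intro y hy
    refine ⟨0, ?_⟩
    have : ∀ k, (inner ℝ (b (ψ k)) y : ℝ) = 0 := fun k =>
      hy (b (ψ k)) (Submodule.subset_span ⟨ψ k, rfl⟩)
    simpa [this] using tendsto_const_nhds (α := ℝ)
  have hKC : ∀ y : H, y ∈ C := by
    set K : Submodule ℝ H := W.topologicalClosure with hK
    haveI : CompleteSpace K := W.isClosed_topologicalClosure.completeSpace_coe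
    have hsup : K ⊔ Kᗮ = ⊤ := Submodule.sup_orthogonal_of_hasOrthogonalProjection
    intro y
    have : y ∈ K ⊔ Kᗮ := by rw [hsup]; trivial
    obtain ⟨u, hu, v, hv, rfl⟩ := Submodule.mem_sup.mp this
    have huC : u ∈ C := by
      apply hCclosed
      have : (K : Set H) ⊆ closure C := by
        have h1 : (K : Set H) = closure (W : Set H) := by
          rw [hK, Submodule.topologicalClosure_coe]
        rw [h1]
        exact closure_mono hWC
      exact this hu
    have hvC : v ∈ C := hWperpC (Submodule.orthogonal_le W.le_topologicalClosure hv)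
    obtain ⟨Lu, hLu⟩ := huC
    obtain ⟨Lv, hLv⟩ := hvC
    exact ⟨Lu + Lv, by simpa [inner_add_right] using hLu.add hLv⟩
  choose Lfun hLfun using hKC
  have hbound : ∀ y : H, |Lfun y| ≤ R * ‖y‖ := by
    intro y
    exact le_of_tendsto (hLfun y).abs (Filter.Eventually.of_forall fun k => hbnd _ _)
  have hadd : ∀ u v : H, Lfun (u + v) = Lfun u + Lfun v := by
    intro u v
    refine tendsto_nhds_unique (hLfun (u + v)) ?_
    simpa [inner_add_right] using (hLfun u).add (hLfun v)
  have hsmul : ∀ (c : ℝ) (u : H), Lfun (c • u) = c * Lfun u := by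
    intro c u
    refine tendsto_nhds_unique (hLfun (c • u)) ?_
    simpa [real_inner_smul_right] using (hLfun u).const_mul c
  set ℓ : H →L[ℝ] ℝ := LinearMap.mkContinuous
    { toFun := Lfun, map_add' := hadd, map_smul' := hsmul } R
    (fun y => by simpa [Real.norm_eq_abs] using hbound y) with hℓ
  refine ⟨ψ, (InnerProductSpace.toDual ℝ H).symm ℓ, hψ, fun y => ?_⟩
  have : (inner ℝ ((InnerProductSpace.toDual ℝ H).symm ℓ) y : ℝ) = ℓ y :=
    InnerProductSpace.toDual_symm_apply
  rw [this]
  exact hLfun y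

/-- If nonempty bounded closed convex sets `A n` converge to `A∞` in the Mosco sense
in a Hilbert space, then the minimisers of the squared norm over `A n` converge
strongly to the minimiser over `A∞`. -/
theorem stmt15 (H : Type*) [NormedAddCommGroup H] [InnerProductSpace ℝ H] [CompleteSpace H]
    (A : ℕ → Set H) (A' : Set H)
    (hA : ∀ n, (A n).Nonempty ∧ Bornology.IsBounded (A n) ∧ IsClosed (A n) ∧ Convex ℝ (A n))
    (hA' : A'.Nonempty ∧ Bornology.IsBounded A' ∧ IsClosed A' ∧ Convex ℝ A')
    (mosco1 : ∀ a ∈ A', ∃ a_n : ℕ → H, (∀ n, a_n n ∈ A n) ∧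
      Filter.Tendsto a_n Filter.atTop (nhds a))
    (mosco2 : ∀ φ : ℕ → ℕ, StrictMono φ → ∀ b : ℕ → H, (∀ k, b k ∈ A (φ k)) →
      ∀ a : H, (∀ y : H, Filter.Tendsto (fun k => (inner ℝ (b k) y : ℝ)) Filter.atTop
        (nhds (inner ℝ a y))) → a ∈ A')
    (x : ℕ → H) (x' : H)
    (hx : ∀ n, x n ∈ A n ∧ ∀ y ∈ A n, ‖x n‖ ^ 2 ≤ ‖y‖ ^ 2)
    (hx' : x' ∈ A' ∧ ∀ y ∈ A', ‖x'‖ ^ 2 ≤ ‖y‖ ^ 2) :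
    Filter.Tendsto (fun n => ‖x n - x'‖) Filter.atTop (nhds 0) := by
  obtain ⟨hx'mem, hx'min⟩ := hx'
  obtain ⟨aseq, ha_mem, ha_tend⟩ := mosco1 x' hx'mem
  have hxa : ∀ n, ‖x n‖ ≤ ‖aseq n‖ := by
    intro n
    have h := (hx n).2 (aseq n) (ha_mem n)
    nlinarith [norm_nonneg (x n), norm_nonneg (aseq n)]
  have hna : Tendsto (fun n => ‖aseq n‖) atTop (nhds ‖x'‖) := ha_tend.norm
  obtain ⟨R0, hR0⟩ := hna.bddAbove_range
  have hxbdd : ∀ n, ‖x n‖ ≤ R0 := fun n => (hxa n).trans (hR0 ⟨n, rfl⟩)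
  have hupper : ∀ ε : ℝ, 0 < ε → ∀ᶠ n in atTop, ‖x n‖ < ‖x'‖ + ε := by
    intro ε hε
    filter_upwards [hna.eventually (eventually_lt_nhds (lt_add_of_pos_right ‖x'‖ hε))]
      with n hn
    exact lt_of_le_of_lt (hxa n) hn
  apply Filter.tendsto_of_subseq_tendsto
  intro ns hns
  obtain ⟨φ0, hφ0, hnsφ0⟩ := strictMono_subseq_of_tendsto_atTop hns
  set φ : ℕ → ℕ := ns ∘ φ0 with hφdef
  obtain ⟨ψ, a, hψ, hweak⟩ := weak_seq_cpt (fun k => x (φ k)) R0 (fun k => hxbdd _)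
  have hφψ : StrictMono (φ ∘ ψ) := hnsφ0.comp hψ
  have haA' : a ∈ A' := mosco2 (φ ∘ ψ) hφψ (fun k => x (φ (ψ k)))
    (fun k => (hx (φ (ψ k))).1) a (fun y => hweak y)
  -- ‖a‖ ≤ ‖x'‖
  have hanorm : ‖a‖ ≤ ‖x'‖ := by
    have hstep : ∀ ε : ℝ, 0 < ε → ‖a‖ ≤ ‖x'‖ + ε := by
      intro ε hε
      have hev : ∀ᶠ k in atTop, (inner ℝ (x (φ (ψ k))) a : ℝ) ≤ (‖x'‖ + ε) * ‖a‖ := by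
        filter_upwards [hφψ.tendsto_atTop.eventually (hupper ε hε)] with k hk
        calc (inner ℝ (x (φ (ψ k))) a : ℝ) ≤ ‖x (φ (ψ k))‖ * ‖a‖ := real_inner_le_norm _ _
          _ ≤ (‖x'‖ + ε) * ‖a‖ := mul_le_mul_of_nonneg_right hk.le (norm_nonneg a)
      have h2 : (inner ℝ a a : ℝ) ≤ (‖x'‖ + ε) * ‖a‖ := le_of_tendsto (hweak a) hev
      rw [real_inner_self_eq_norm_sq] at h2
      by_contra hcon
      push_neg at hcon
      nlinarith [norm_nonneg a, norm_nonneg x']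
    exact le_of_forall_pos_le_add hstep
  -- a = x'
  have haeq : a = x' := by
    have h1 : ‖x'‖ ^ 2 ≤ ‖a‖ ^ 2 := hx'min a haA'
    have hmid : (1/2 : ℝ) • a + (1/2 : ℝ) • x' ∈ A' :=
      hA'.2.2.2 haA' hx'mem (by norm_num) (by norm_num) (by norm_num)
    have h2 : ‖x'‖ ^ 2 ≤ ‖(1/2 : ℝ) • a + (1/2 : ℝ) • x'‖ ^ 2 := hx'min _ hmid
    have h3 : (1/2 : ℝ) • a + (1/2 : ℝ) • x' = (1/2 : ℝ) • (a + x') := by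
      rw [smul_add]
    have h4 : ‖(1/2 : ℝ) • (a + x')‖ = (1/2) * ‖a + x'‖ := by
      rw [norm_smul]; norm_num
    rw [h3, h4] at h2
    have hpar := parallelogram_law_with_norm ℝ a x'
    have h5 : ‖a - x'‖ ≤ 0 := by
      nlinarith [norm_nonneg (a - x'), norm_nonneg (a + x'), norm_nonneg a, norm_nonneg x']
    have h6 : ‖a - x'‖ = 0 := le_antisymm h5 (norm_nonneg _)
    rwa [norm_sub_eq_zero_iff] at h6
  -- strong convergence along the sub-subsequence
  refine ⟨φ0 ∘ ψ, ?_⟩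
  have hgoal : Tendsto (fun k => ‖x (φ (ψ k)) - x'‖) atTop (nhds 0) := by
    rw [Metric.tendsto_atTop]
    intro ε hε
    set δ : ℝ := min 1 (ε ^ 2 / (2 * ‖x'‖ + 3)) with hδdef
    have hδpos : 0 < δ := lt_min one_pos (by positivity)
    have hδ1 : δ ≤ 1 := min_le_left _ _
    have hδ2 : δ * (2 * ‖x'‖ + 3) ≤ ε ^ 2 := by
      have := min_le_right 1 (ε ^ 2 / (2 * ‖x'‖ + 3))
      rw [← le_div_iff₀ (by positivity)]
      exact this
    have hE1 : ∀ᶠ k in atTop, ‖x (φ (ψ k))‖ < ‖x'‖ + δ :=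
      hφψ.tendsto_atTop.eventually (hupper δ hδpos)
    have hE2 : ∀ᶠ k in atTop, ‖x'‖ ^ 2 - δ < (inner ℝ (x (φ (ψ k))) x' : ℝ) := by
      have hlim : Tendsto (fun k => (inner ℝ (x (φ (ψ k))) x' : ℝ)) atTop
          (nhds (‖x'‖ ^ 2)) := by
        have := hweak x'
        rwa [haeq, real_inner_self_eq_norm_sq] at this
      exact hlim.eventually (eventually_gt_nhds (by linarith))
    rw [← eventually_atTop]
    filter_upwards [hE1, hE2] with k h1 h2
    have hexp := norm_sub_sq_real (x (φ (ψ k))) x'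
    have hnn : (0:ℝ) ≤ ‖x (φ (ψ k)) - x'‖ := norm_nonneg _
    have hnn2 : (0:ℝ) ≤ ‖x (φ (ψ k))‖ := norm_nonneg _
    have hsq : ‖x (φ (ψ k)) - x'‖ ^ 2 < ε ^ 2 := by nlinarith [norm_nonneg x']
    have : ‖x (φ (ψ k)) - x'‖ < ε := by nlinarith
    rwa [Real.dist_eq, sub_zero, abs_of_nonneg hnn]
  exact hgoal
end

section
/- Let H be a Hilbert space, A ⊆ H a nonempty bounded closed convex set, F : H → ℝ convex continuous and bounded below, and F^ε its Moreau–Yosida regularisations F^ε(x) = inf_y [(1/ε)‖x−y‖² + F(y)]. Assume F is strictly convex so that both argmin_A F and argmin_A F^ε are singletons {x̄} and {x̄^ε}. Then min_A F^ε → min_A F as ε → 0+ and x̄^ε ⇀ x̄ weakly; if moreover F(z) = ‖z‖² + G(z) with G convex continuous, then x̄^ε → x̄ strongly. -/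
open Filter Topology

section helpers
variable {H : Type*} [NormedAddCommGroup H] [InnerProductSpace ℝ H] [CompleteSpace H]

/-- A closed convex set is closed under weak limits of nets. -/
lemma weakMem_of_closed_convex {ι : Type*} {l : Filter ι} [l.NeBot] {C : Set H}
    (hCc : IsClosed C) (hCconv : Convex ℝ C) {u : ι → H} {x : H}
    (hu : ∀ᶠ i in l, u i ∈ C)
    (hw : ∀ v : H, Tendsto (fun i => (inner ℝ (u i) v : ℝ)) l (𝓝 (inner ℝ x v))) : x ∈ C := by
  by_contra hx
  obtain ⟨f, c, hfs, hfx⟩ := geometric_hahn_banach_closed_point hCconv hCc hx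
  set w := (InnerProductSpace.toDual ℝ H).symm f with hwdef
  have hfv : ∀ z : H, f z = (inner ℝ w z : ℝ) := by
    intro z
    rw [← InnerProductSpace.toDual_apply_apply, hwdef]
    simp
  have h1 : Tendsto (fun i => f (u i)) l (𝓝 (f x)) := by
    simp only [hfv]
    simpa [real_inner_comm] using hw w
  have h2 : f x ≤ c := le_of_tendsto h1 (hu.mono fun i hi => (hfs _ hi).le)
  exact absurd hfx (not_lt.mpr h2)

/-- Weak compactness along ultrafilters, via Banach–Alaoglu and Riesz. -/
lemma exists_weakLimit {ι : Type*} (𝒰 : Ultrafilter ι) {u : ι → H} {R : ℝ}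
    (hu : ∀ᶠ i in (𝒰 : Filter ι), ‖u i‖ ≤ R) :
    ∃ x : H, ∀ v : H, Tendsto (fun i => (inner ℝ (u i) v : ℝ)) 𝒰 (𝓝 (inner ℝ x v)) := by
  set ι2 : H → WeakDual ℝ H := fun z => (InnerProductSpace.toDual ℝ H z : StrongDual ℝ H)
    with hι2
  have hcp : IsCompact (WeakDual.toStrongDual ⁻¹' Metric.closedBall 0 R : Set (WeakDual ℝ H)) :=
    WeakDual.isCompact_closedBall (𝕜 := ℝ) (E := H) 0 R
  have hmem : (WeakDual.toStrongDual ⁻¹' Metric.closedBall 0 R : Set (WeakDual ℝ H)) ∈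
      Filter.map (fun i => ι2 (u i)) (𝒰 : Filter ι) := by
    rw [Filter.mem_map]
    filter_upwards [hu] with i hi
    simp only [Set.mem_preimage, Metric.mem_closedBall, dist_zero_right, Set.mem_setOf_eq]
    exact ((InnerProductSpace.toDual ℝ H).norm_map (u i)).le.trans hi
  obtain ⟨φ, hφmem, hφ⟩ := hcp.ultrafilter_le_nhds (𝒰.map (fun i => ι2 (u i)))
    (by rwa [Ultrafilter.coe_map, le_principal_iff])
  have htd : Tendsto (fun i => ι2 (u i)) (𝒰 : Filter ι) (𝓝 φ) := by
    rwa [Ultrafilter.coe_map] at hφ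
  refine ⟨(InnerProductSpace.toDual ℝ H).symm φ, fun v => ?_⟩
  have h := tendsto_iff_forall_eval_tendsto_topDualPairing.mp htd v
  change Tendsto (fun i => (ι2 (u i)) v) _ (𝓝 (φ v)) at h
  have h1 : ∀ i, (ι2 (u i)) v = (inner ℝ (u i) v : ℝ) := fun i => InnerProductSpace.toDual_apply_apply
  have h2 : φ v = (inner ℝ ((InnerProductSpace.toDual ℝ H).symm φ) v : ℝ) := by
    conv_lhs => rw [← (InnerProductSpace.toDual ℝ H).apply_symm_apply φ]
    exact InnerProductSpace.toDual_apply_apply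
  rw [← h2]
  simpa [h1] using h

lemma ultrafilter_real_limit {ι : Type*} (𝒰 : Ultrafilter ι) {f : ι → ℝ} {a b : ℝ}
    (h : ∀ᶠ i in (𝒰 : Filter ι), f i ∈ Set.Icc a b) :
    ∃ t ∈ Set.Icc a b, Tendsto f (𝒰 : Filter ι) (𝓝 t) := by
  obtain ⟨t, ht, h2⟩ := (isCompact_Icc (a := a) (b := b)).ultrafilter_le_nhds (𝒰.map f)
    (by rw [Ultrafilter.coe_map, le_principal_iff, Filter.mem_map]; exact h)
  exact ⟨t, ht, by rwa [Ultrafilter.coe_map] at h2⟩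

end helpers

/-- Convergence of the Moreau–Yosida regularised minimisation: the minima converge,
the regularised minimisers converge weakly to the minimiser of `F`, and strongly if
`F` has the quadratic structure `F = ‖·‖² + G` with `G` convex continuous. -/
theorem stmt16 (H : Type*) [NormedAddCommGroup H] [InnerProductSpace ℝ H] [CompleteSpace H]
    (A : Set H) (hA : A.Nonempty) (hAb : Bornology.IsBounded A) (hAc : IsClosed A)
    (hAconv : Convex ℝ A)
    (F : H → ℝ) (hFstrict : StrictConvexOn ℝ Set.univ F)
    (hFcont : Continuous F) (hFbd : BddBelow (Set.range F))
    (Fε : ℝ → H → ℝ)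
    (hFε : ∀ ε : ℝ, 0 < ε → ∀ x : H, Fε ε x = ⨅ y : H, (1 / ε) * ‖x - y‖ ^ 2 + F y)
    (xbar : H) (hxbar : xbar ∈ A ∧ ∀ z ∈ A, F xbar ≤ F z)
    (xε : ℝ → H) (hxε : ∀ ε : ℝ, 0 < ε → xε ε ∈ A ∧ ∀ z ∈ A, Fε ε (xε ε) ≤ Fε ε z) :
    Filter.Tendsto (fun ε => Fε ε (xε ε)) (nhdsWithin 0 (Set.Ioi 0)) (nhds (F xbar)) ∧
    (∀ y : H, Filter.Tendsto (fun ε => (inner ℝ (xε ε) y : ℝ))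
      (nhdsWithin 0 (Set.Ioi 0)) (nhds (inner ℝ xbar y))) ∧
    (∀ G : H → ℝ, ConvexOn ℝ Set.univ G → Continuous G → (∀ z, F z = ‖z‖ ^ 2 + G z) →
      Filter.Tendsto (fun ε => ‖xε ε - xbar‖) (nhdsWithin 0 (Set.Ioi 0)) (nhds 0)) := by
  classical
  obtain ⟨m, hm⟩ := hFbd
  have hm' : ∀ z, m ≤ F z := fun z => hm ⟨z, rfl⟩
  set l : Filter ℝ := nhdsWithin 0 (Set.Ioi 0) with hldef
  obtain ⟨R, hR⟩ := hAb.subset_closedBall 0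
  have hev_pos : ∀ᶠ ε in l, (0 : ℝ) < ε := self_mem_nhdsWithin
  have hid0 : Tendsto (fun ε : ℝ => ε) l (𝓝 0) := tendsto_id.mono_left nhdsWithin_le_nhds
  -- basic facts about Fε
  have hbdd : ∀ (ε : ℝ), 0 < ε → ∀ x : H,
      BddBelow (Set.range fun y => (1/ε) * ‖x - y‖^2 + F y) := by
    intro ε hε x
    refine ⟨m, ?_⟩
    rintro r ⟨y, rfl⟩
    have h0 : (0:ℝ) ≤ (1/ε) * ‖x - y‖^2 := by positivity
    have := hm' y
    dsimp only
    linarith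
  have hFε_le : ∀ ε : ℝ, 0 < ε → ∀ x : H, Fε ε x ≤ F x := by
    intro ε hε x
    rw [hFε ε hε]
    have := ciInf_le (hbdd ε hε x) x
    simpa using this
  have hFε_ge : ∀ ε : ℝ, 0 < ε → ∀ x : H, m ≤ Fε ε x := by
    intro ε hε x
    rw [hFε ε hε]
    refine le_ciInf fun y => ?_
    have h0 : (0:ℝ) ≤ (1/ε) * ‖x - y‖^2 := by positivity
    have := hm' y
    linarith
  have hmin_le : ∀ ε : ℝ, 0 < ε → Fε ε (xε ε) ≤ F xbar :=
    fun ε hε => ((hxε ε hε).2 xbar hxbar.1).trans (hFε_le ε hε xbar)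
  -- near minimizers
  have hYex : ∀ ε : ℝ, 0 < ε → ∃ y : H, (1/ε) * ‖xε ε - y‖^2 + F y < Fε ε (xε ε) + ε := by
    intro ε hε
    have h1 : (⨅ y : H, (1/ε) * ‖xε ε - y‖^2 + F y) < Fε ε (xε ε) + ε := by
      rw [← hFε ε hε]; linarith
    exact exists_lt_of_ciInf_lt h1
  choose! Y hY using hYex
  have hq : ∀ ε : ℝ, 0 < ε → (0:ℝ) ≤ (1/ε) * ‖xε ε - Y ε‖^2 := by
    intro ε hε; positivity
  have hFY_lt : ∀ ε : ℝ, 0 < ε → F (Y ε) < F xbar + ε := by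
    intro ε hε
    have := hY ε hε
    have := hmin_le ε hε
    have := hq ε hε
    linarith
  have hdist2 : ∀ ε : ℝ, 0 < ε → ‖xε ε - Y ε‖^2 ≤ ε * (F xbar + ε - m) := by
    intro ε hε
    have h1 : (1/ε) * ‖xε ε - Y ε‖^2 ≤ F xbar + ε - m := by
      have := hY ε hε
      have := hm' (Y ε)
      have := hmin_le ε hε
      linarith
    have h2 := mul_le_mul_of_nonneg_left h1 hε.le
    calc ‖xε ε - Y ε‖^2 = ε * ((1/ε) * ‖xε ε - Y ε‖^2) := by
          field_simp
      _ ≤ ε * (F xbar + ε - m) := h2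
  have hb0 : Tendsto (fun ε : ℝ => ε * (F xbar + ε - m)) l (𝓝 0) := by
    have hc : Continuous (fun ε : ℝ => ε * (F xbar + ε - m)) := by continuity
    have h2 : Tendsto (fun ε : ℝ => ε * (F xbar + ε - m)) l (𝓝 (0 * (F xbar + 0 - m))) :=
      (hc.tendsto 0).mono_left (nhdsWithin_le_nhds (s := Set.Ioi 0))
    simpa using h2
  have hdist_sq : Tendsto (fun ε => ‖xε ε - Y ε‖^2) l (𝓝 0) := by
    refine squeeze_zero' (hev_pos.mono fun ε _ => by positivity)
      (hev_pos.mono fun ε hε => hdist2 ε hε) hb0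
  have hdist : Tendsto (fun ε => ‖xε ε - Y ε‖) l (𝓝 0) := by
    have h := (Real.continuous_sqrt.tendsto 0).comp hdist_sq
    simp only [Function.comp_def, Real.sqrt_zero] at h
    convert h using 2 with ε
    rw [Real.sqrt_sq (norm_nonneg _)]
  have hxnorm : ∀ ε : ℝ, 0 < ε → ‖xε ε‖ ≤ R := by
    intro ε hε
    have := hR (hxε ε hε).1
    rwa [Metric.mem_closedBall, dist_zero_right] at this
  have hYnorm : ∀ᶠ ε in l, ‖Y ε‖ ≤ R + 1 := by
    have h1 : ∀ᶠ ε in l, ‖xε ε - Y ε‖ ≤ 1 :=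
      hdist.eventually (tendsto_id.eventually_le_const (by norm_num))
    filter_upwards [h1, hev_pos] with ε h1 hε
    have h3 : ‖xε ε - (xε ε - Y ε)‖ ≤ ‖xε ε‖ + ‖xε ε - Y ε‖ := norm_sub_le _ _
    rw [sub_sub_cancel] at h3
    linarith [hxnorm ε hε]
  -- sublevel sets of convex continuous functions are weakly closed; helper
  have hsub : ∀ (G' : H → ℝ), Continuous G' → ConvexOn ℝ Set.univ G' →
      ∀ (𝒰 : Ultrafilter ℝ) (u : ℝ → H) (x : H) (c : ℝ),
      (∀ᶠ ε in (𝒰 : Filter ℝ), G' (u ε) ≤ c) →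
      (∀ v : H, Tendsto (fun ε => (inner ℝ (u ε) v : ℝ)) 𝒰 (𝓝 (inner ℝ x v))) → G' x ≤ c := by
    intro G' hG'c hG'conv 𝒰 u x c hev hw
    have hCc : IsClosed {z : H | G' z ≤ c} := isClosed_le hG'c continuous_const
    have hCconv : Convex ℝ {z : H | G' z ≤ c} := by
      have := hG'conv.convex_le c
      simpa using this
    exact weakMem_of_closed_convex hCc hCconv hev hw
  -- the key per-ultrafilter statement
  have key : ∀ 𝒰 : Ultrafilter ℝ, (𝒰 : Filter ℝ) ≤ l →
      (∀ v : H, Tendsto (fun ε => (inner ℝ (xε ε) v : ℝ)) 𝒰 (𝓝 (inner ℝ xbar v))) ∧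
      (∀ v : H, Tendsto (fun ε => (inner ℝ (Y ε) v : ℝ)) 𝒰 (𝓝 (inner ℝ xbar v))) := by
    intro 𝒰 h𝒰
    have hUpos : ∀ᶠ ε in (𝒰 : Filter ℝ), (0:ℝ) < ε := h𝒰 hev_pos
    obtain ⟨xhat, hxhat⟩ := exists_weakLimit 𝒰 (u := xε) (R := R)
      (hUpos.mono fun ε hε => hxnorm ε hε)
    -- Y converges weakly to xhat as well
    have hYw : ∀ v : H, Tendsto (fun ε => (inner ℝ (Y ε) v : ℝ)) 𝒰 (𝓝 (inner ℝ xhat v)) := by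
      intro v
      have hdiff : Tendsto (fun ε => (inner ℝ (Y ε - xε ε) v : ℝ)) (𝒰 : Filter ℝ) (𝓝 0) := by
        have hnorm : Tendsto (fun ε => ‖xε ε - Y ε‖ * ‖v‖) (𝒰 : Filter ℝ) (𝓝 0) := by
          have := (hdist.mono_left h𝒰).mul_const ‖v‖
          simpa using this
        refine squeeze_zero_norm (fun ε => ?_) hnorm
        calc ‖(inner ℝ (Y ε - xε ε) v : ℝ)‖ ≤ ‖Y ε - xε ε‖ * ‖v‖ := by
              simpa using abs_real_inner_le_norm (Y ε - xε ε) v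
          _ = ‖xε ε - Y ε‖ * ‖v‖ := by rw [norm_sub_rev]
      have := (hxhat v).add hdiff
      simp only [add_zero] at this
      convert this using 2 with ε
      rw [← inner_add_left]
      congr 1
      abel
    have hxhatA : xhat ∈ A :=
      weakMem_of_closed_convex hAc hAconv (hUpos.mono fun ε hε => (hxε ε hε).1) hxhat
    have hFxhat : F xhat ≤ F xbar := by
      refine le_of_forall_gt_imp_ge_of_dense fun c hc => ?_
      refine hsub F hFcont hFstrict.convexOn 𝒰 Y xhat c ?_ hYw
      have hsm : ∀ᶠ ε in (𝒰 : Filter ℝ), ε < c - F xbar :=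
        ((hid0.mono_left h𝒰).eventually_lt_const (by linarith))
      filter_upwards [hsm, hUpos] with ε h1 h2
      have := hFY_lt ε h2
      linarith
    have hxhat_eq : xhat = xbar := by
      by_contra hne
      have hmid := hFstrict.2 (Set.mem_univ xhat) (Set.mem_univ xbar) hne
        (by norm_num : (0:ℝ) < 1/2) (by norm_num : (0:ℝ) < 1/2) (by norm_num)
      have hmemA : (1/2 : ℝ) • xhat + (1/2 : ℝ) • xbar ∈ A :=
        hAconv hxhatA hxbar.1 (by norm_num) (by norm_num) (by norm_num)
      have h2 := hxbar.2 _ hmemA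
      rw [smul_eq_mul, smul_eq_mul] at hmid
      linarith [hFxhat]
    rw [hxhat_eq] at hxhat hYw
    exact ⟨hxhat, hYw⟩
  -- Part (a)
  have parta : Tendsto (fun ε => Fε ε (xε ε)) l (𝓝 (F xbar)) := by
    rw [Filter.tendsto_iff_ultrafilter]
    intro 𝒰 h𝒰
    have hUpos : ∀ᶠ ε in (𝒰 : Filter ℝ), (0:ℝ) < ε := h𝒰 hev_pos
    obtain ⟨hxw, hYw⟩ := key 𝒰 h𝒰
    obtain ⟨t, htmem, ht⟩ := ultrafilter_real_limit 𝒰 (f := fun ε => Fε ε (xε ε)) (a := m)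
      (b := F xbar) (hUpos.mono fun ε hε => ⟨hFε_ge ε hε _, hmin_le ε hε⟩)
    have htge : F xbar ≤ t := by
      refine le_of_forall_gt_imp_ge_of_dense fun c hc => ?_
      refine hsub F hFcont hFstrict.convexOn 𝒰 Y xbar c ?_ hYw
      have h1 : Tendsto (fun ε => Fε ε (xε ε) + ε) (𝒰 : Filter ℝ) (𝓝 (t + 0)) :=
        ht.add (hid0.mono_left h𝒰)
      rw [add_zero] at h1
      have h2 : ∀ᶠ ε in (𝒰 : Filter ℝ), Fε ε (xε ε) + ε < c := h1.eventually_lt_const hc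
      filter_upwards [h2, hUpos] with ε h2 hε
      have := hY ε hε
      have := hq ε hε
      linarith
    have hteq : t = F xbar := le_antisymm htmem.2 htge
    rwa [hteq] at ht
  refine ⟨parta, fun v => ?_, ?_⟩
  · rw [Filter.tendsto_iff_ultrafilter]
    intro 𝒰 h𝒰
    exact (key 𝒰 h𝒰).1 v
  · -- Part (c): strong convergence in the quadratic case
    intro G hGconv hGcont hFG
    rw [Filter.tendsto_iff_ultrafilter]
    intro 𝒰 h𝒰
    have hUpos : ∀ᶠ ε in (𝒰 : Filter ℝ), (0:ℝ) < ε := h𝒰 hev_pos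
    obtain ⟨hxw, hYw⟩ := key 𝒰 h𝒰
    have hUsmall : ∀ᶠ ε in (𝒰 : Filter ℝ), ε < 1 :=
      (hid0.mono_left h𝒰).eventually_lt_const one_pos
    have hYb : ∀ᶠ ε in (𝒰 : Filter ℝ), ‖Y ε‖ ≤ R + 1 := h𝒰 hYnorm
    -- limit of F (Y ε)
    obtain ⟨f, hfmem, hf⟩ := ultrafilter_real_limit 𝒰 (f := fun ε => F (Y ε)) (a := m)
      (b := F xbar + 1) (by
        filter_upwards [hUpos, hUsmall] with ε h1 h2
        exact ⟨hm' _, by linarith [hFY_lt ε h1]⟩)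
    have hf_le : f ≤ F xbar := by
      have h1 : Tendsto (fun ε : ℝ => F xbar + ε) (𝒰 : Filter ℝ) (𝓝 (F xbar + 0)) :=
        tendsto_const_nhds.add (hid0.mono_left h𝒰)
      rw [add_zero] at h1
      exact le_of_tendsto_of_tendsto hf h1 (hUpos.mono fun ε hε => (hFY_lt ε hε).le)
    -- limit of G (Y ε)
    have hGbound : ∀ᶠ ε in (𝒰 : Filter ℝ), G (Y ε) ∈ Set.Icc (m - (R+1)^2) (F xbar + 1) := by
      filter_upwards [hYb, hUpos, hUsmall] with ε h1 h2 h3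
      have hsq : ‖Y ε‖^2 ≤ (R+1)^2 := by nlinarith [norm_nonneg (Y ε)]
      have hFGe := hFG (Y ε)
      refine ⟨by nlinarith [hm' (Y ε)], by nlinarith [sq_nonneg ‖Y ε‖, hFY_lt ε h2]⟩
    obtain ⟨g, hgmem, hg⟩ := ultrafilter_real_limit 𝒰 hGbound
    have hGxbar_le : G xbar ≤ g := by
      refine le_of_forall_gt_imp_ge_of_dense fun c hc => ?_
      exact hsub G hGcont hGconv 𝒰 Y xbar c (hg.eventually_le_const hc) hYw
    -- limit of ‖Y ε‖^2 is f - g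
    have hnsq : Tendsto (fun ε => ‖Y ε‖^2) (𝒰 : Filter ℝ) (𝓝 (f - g)) := by
      have heq : (fun ε => ‖Y ε‖^2) = fun ε => F (Y ε) - G (Y ε) := by
        funext ε; rw [hFG (Y ε)]; ring
      rw [heq]; exact hf.sub hg
    have hfg_nonneg : (0:ℝ) ≤ f - g :=
      ge_of_tendsto hnsq (Eventually.of_forall fun ε => sq_nonneg _)
    have hxbar_le : ‖xbar‖^2 ≤ f - g := by
      refine le_of_forall_gt_imp_ge_of_dense fun c hc => ?_
      have hc0 : (0:ℝ) ≤ c := le_of_lt (lt_of_le_of_lt hfg_nonneg hc)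
      have hmem2 : xbar ∈ Metric.closedBall (0:H) (Real.sqrt c) := by
        refine weakMem_of_closed_convex Metric.isClosed_closedBall (convex_closedBall 0 _) ?_ hYw
        filter_upwards [hnsq.eventually_le_const hc] with ε h1
        rw [Metric.mem_closedBall, dist_zero_right]
        exact (Real.le_sqrt (norm_nonneg _) hc0).mpr h1
      rw [Metric.mem_closedBall, dist_zero_right] at hmem2
      exact (Real.le_sqrt (norm_nonneg _) hc0).mp hmem2
    have hs_eq : f - g = ‖xbar‖^2 := by
      have h1 : f - g ≤ ‖xbar‖^2 := by
        have := hFG xbar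
        linarith
      exact le_antisymm h1 hxbar_le
    -- ‖Y ε - xbar‖^2 → 0
    have h0 : Tendsto (fun ε => ‖Y ε - xbar‖^2) (𝒰 : Filter ℝ) (𝓝 0) := by
      have hid : (fun ε => ‖Y ε - xbar‖^2) =
          fun ε => ‖Y ε‖^2 - 2 * (inner ℝ (Y ε) xbar : ℝ) + ‖xbar‖^2 := by
        funext ε
        exact norm_sub_sq_real (Y ε) xbar
      rw [hid]
      have h1 := (hnsq.sub ((hYw xbar).const_mul 2)).add
        (tendsto_const_nhds (x := ‖xbar‖^2) (f := (𝒰 : Filter ℝ)))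
      have h2 : f - g - 2 * (inner ℝ xbar xbar : ℝ) + ‖xbar‖^2 = 0 := by
        rw [hs_eq, real_inner_self_eq_norm_sq]
        ring
      rwa [h2] at h1
    have hYs : Tendsto (fun ε => ‖Y ε - xbar‖) (𝒰 : Filter ℝ) (𝓝 0) := by
      have h := (Real.continuous_sqrt.tendsto 0).comp h0
      simp only [Function.comp_def, Real.sqrt_zero] at h
      convert h using 2 with ε
      rw [Real.sqrt_sq (norm_nonneg _)]
    -- combine
    have htri : ∀ ε : ℝ, ‖xε ε - xbar‖ ≤ ‖xε ε - Y ε‖ + ‖Y ε - xbar‖ := by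
      intro ε
      have := norm_sub_le (xε ε - Y ε) (xbar - Y ε)
      calc ‖xε ε - xbar‖ = ‖(xε ε - Y ε) - (xbar - Y ε)‖ := by abel_nf
        _ ≤ ‖xε ε - Y ε‖ + ‖xbar - Y ε‖ := norm_sub_le _ _
        _ = ‖xε ε - Y ε‖ + ‖Y ε - xbar‖ := by rw [norm_sub_rev (xbar)]
    have hsum : Tendsto (fun ε => ‖xε ε - Y ε‖ + ‖Y ε - xbar‖) (𝒰 : Filter ℝ) (𝓝 0) := by
      have := (hdist.mono_left h𝒰).add hYs
      simpa using this
    exact squeeze_zero (fun ε => norm_nonneg _) htri hsum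
end
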